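/- arXiv:2510.03671 — 3 statements merged into one kernel-verified Lean document; each statement's English description precedes it below -/
import Mathlib

section
/- With notation as in the definition of T(n,ℓ,r) (two-row standard Young tableaux of size n with r runs of length ℓ in the second row, cyclic mod-(n−ℓ) gaps between run starts at least 2ℓ), the set T(n,ℓ,r) is closed under promotion. -/
structure SYT (μ : YoungDiagram) where
  entry : ℕ → ℕ → ℕ
  row_strict : ∀ i j1 j2, j1 < j2 → (i, j2) ∈ μ → entry i j1 < entry i j2
  col_strict : ∀ i1 i2 j, i1 < i2 → (i2, j) ∈ μ → entry i1 j < entry i2 j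
  zeros : ∀ i j, (i, j) ∉ μ → entry i j = 0
  mem_range : ∀ i j, (i, j) ∈ μ → 1 ≤ entry i j ∧ entry i j ≤ μ.card
  bij : ∀ m, 1 ≤ m → m ≤ μ.card → ∃! c : ℕ × ℕ, c ∈ μ ∧ entry c.1 c.2 = m

/-- One jeu-de-taquin step of the empty box during promotion: from the empty box at `c`,
the smaller of the entries directly to the right of and below `c` slides into `c`;
`c'` is the cell that entry occupied. -/
def SlideStep (μ : YoungDiagram) (T : SYT μ) (c c' : ℕ × ℕ) : Prop :=
  (c' = (c.1, c.2 + 1) ∨ c' = (c.1 + 1, c.2)) ∧ c' ∈ μ ∧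
    ∀ c'' : ℕ × ℕ, (c'' = (c.1, c.2 + 1) ∨ c'' = (c.1 + 1, c.2)) → c'' ∈ μ →
      T.entry c'.1 c'.2 ≤ T.entry c''.1 c''.2

/-- A cell of `μ` with no cell of `μ` to its right or below it. -/
def IsInnerCorner (μ : YoungDiagram) (c : ℕ × ℕ) : Prop :=
  c ∈ μ ∧ (c.1, c.2 + 1) ∉ μ ∧ (c.1 + 1, c.2) ∉ μ

/-- The full slide path of the empty box during promotion of `T`: it starts at the
top-left corner (where the `1` was removed), follows jeu-de-taquin slide steps, and
ends at a cell with no cells to its right or below. -/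
def IsSlidePath (μ : YoungDiagram) (T : SYT μ) (p : List (ℕ × ℕ)) : Prop :=
  p.head? = some (0, 0) ∧ List.Chain' (SlideStep μ T) p ∧
    ∃ c, p.getLast? = some c ∧ IsInnerCorner μ c

/-- `S` is the promotion of `T`: remove the `1`, perform jeu-de-taquin slides into the
empty box, decrement all entries by `1`, and place `μ.card` in the final empty box. -/
def IsPromotion (μ : YoungDiagram) (T S : SYT μ) : Prop :=
  ∃ p : List (ℕ × ℕ), IsSlidePath μ T p ∧
    (∀ c : ℕ × ℕ, c ∈ μ → c ∉ p → S.entry c.1 c.2 = T.entry c.1 c.2 - 1) ∧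
    List.Chain' (fun c c' => S.entry c.1 c.2 = T.entry c'.1 c'.2 - 1) p ∧
    ∃ c, p.getLast? = some c ∧ S.entry c.1 c.2 = μ.card

/-- `IsPromIter μ k T S` says that `S` is obtained from `T` by `k` promotion steps. -/
def IsPromIter (μ : YoungDiagram) : ℕ → SYT μ → SYT μ → Prop
  | 0, T, S => S = T
  | k + 1, T, S => ∃ U, IsPromotion μ T U ∧ IsPromIter μ k U S

/-- The order of promotion on `T`: the least `k ≥ 1` with `𝒫^k(T) = T`. -/
noncomputable def promOrder (μ : YoungDiagram) (T : SYT μ) : ℕ :=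
  sInf {k | 0 < k ∧ IsPromIter μ k T T}

/-- Membership in `T(n, ℓ, r)`: the second row of the two-row tableau `T` (of second-row
length `r·ℓ`) partitions into `r` runs of exactly `ℓ` consecutive numbers — a run starting
at `s` is `{s, s+1, ..., s+ℓ-1}`, and at most one wraparound run
`{k+1,...,2k} ∪ {n-ℓ+k+1,...,n}` (with `1 ≤ k ≤ ℓ-1`, whose start is `n-ℓ+k+1`) is
allowed — such that the cyclic differences mod `n-ℓ` between the starts of any two distinct
runs are all at least `2ℓ`. -/
def InTnlr (n ℓ r : ℕ) {μ : YoungDiagram} (T : SYT μ) : Prop :=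
  ∃ st : Fin r → ℕ, ∃ A : Fin r → Finset ℕ,
    (∀ i, A i = Finset.Ico (st i) (st i + ℓ) ∨
      ∃ k, 1 ≤ k ∧ k + 1 ≤ ℓ ∧ st i = n - ℓ + k + 1 ∧
        A i = Finset.Ico (k + 1) (2 * k + 1) ∪ Finset.Ico (n - ℓ + k + 1) (n + 1)) ∧
    (∀ i j, i ≠ j → Disjoint (A i) (A j)) ∧
    (Finset.univ.biUnion A = (Finset.range (r * ℓ)).image (fun j => T.entry 1 j)) ∧
    (∀ i j, i ≠ j →
      2 * ℓ ≤ (((st j : ZMod (n - ℓ)) - (st i : ZMod (n - ℓ))).val))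
lemma slide_path_struct {μ : YoungDiagram} {T : SYT μ} {K m : ℕ} (hm : 1 ≤ m) (hKm : m + 1 ≤ K)
    (h0 : ∀ j, ((0:ℕ), j) ∈ μ ↔ j < K) (h1 : ∀ j, ((1:ℕ), j) ∈ μ ↔ j < m)
    (h2 : ∀ i j, 2 ≤ i → (i, j) ∉ μ) {p : List (ℕ × ℕ)} (hp : IsSlidePath μ T p) :
    ∃ d, 1 ≤ d ∧ d ≤ p.length ∧
      (∀ i (h : i < p.length), p.get ⟨i, h⟩ = if i < d then ((0:ℕ), i) else (1, i - 1)) ∧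
      (d = p.length ∧ p.length = K ∨ d ≤ m ∧ p.length = m + 1) := by
  obtain ⟨hhead, hchain, cl, hlast, hcorner⟩ := hp
  have hne : p ≠ [] := by intro h; rw [h] at hhead; simp at hhead
  have hL : 0 < p.length := List.length_pos_iff.mpr hne
  have hget0 : ∀ (h : 0 < p.length), p.get ⟨0, h⟩ = (0, 0) := by
    intro h
    cases p with
    | nil => simp at hhead
    | cons x t => simpa using hhead
  have hstep : ∀ i (h : i + 1 < p.length),
      SlideStep μ T (p.get ⟨i, by omega⟩) (p.get ⟨i + 1, h⟩) := by
    intro i h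
    exact List.isChain_iff_getElem.mp hchain i (by omega)
  have hP : ∀ i (h : i < p.length),
      p.get ⟨i, h⟩ = (0, i) ∨ (p.get ⟨i, h⟩ = (1, i - 1) ∧ 1 ≤ i) := by
    intro i
    induction i with
    | zero => intro h; left; exact hget0 h
    | succ i ih =>
      intro h
      have hi : i < p.length := by omega
      obtain ⟨hor, hmem, -⟩ := hstep i h
      rcases ih hi with h1' | ⟨h1', hi1⟩
      · rw [h1'] at hor
        rcases hor with h' | h'
        · left; rw [h']
        · right; rw [h']; exact ⟨by simp, by omega⟩
      · rw [h1'] at hor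
        rcases hor with h' | h'
        · right
          rw [h']
          refine ⟨?_, by omega⟩
          show ((1:ℕ), i - 1 + 1) = (1, i + 1 - 1)
          congr 1
          omega
        · exfalso; rw [h'] at hmem; exact h2 2 _ le_rfl hmem
  have hup : ∀ i (h : i < p.length), (p.get ⟨i, h⟩).1 = 1 →
      ∀ i' (h' : i' < p.length), i ≤ i' → p.get ⟨i', h'⟩ = (1, i' - 1) := by
    intro i h h1i
    have hi1 : 1 ≤ i := by
      rcases hP i h with he | ⟨he, h1⟩
      · rw [he] at h1i; simp at h1i
      · exact h1
    have hibase : p.get ⟨i, h⟩ = (1, i - 1) := by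
      rcases hP i h with he | ⟨he, h1⟩
      · rw [he] at h1i; simp at h1i
      · exact he
    intro i'
    induction i' with
    | zero => intro h' hii; omega
    | succ i' ih =>
      intro h' hii
      rcases Nat.lt_or_ge i (i' + 1) with hlt | hge
      · have hi' : i' < p.length := by omega
        have prev : p.get ⟨i', hi'⟩ = (1, i' - 1) := ih hi' (by omega)
        obtain ⟨hor, hmem, -⟩ := hstep i' h'
        rw [prev] at hor
        rcases hor with h'' | h''
        · rw [h'']
          show ((1:ℕ), i' - 1 + 1) = (1, i' + 1 - 1)
          congr 1
          omega
        · exfalso; rw [h''] at hmem; exact h2 2 _ le_rfl hmem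
      · have : i = i' + 1 := by omega
        subst this
        exact hibase
  by_cases hex : ∃ i, (∃ (h : i < p.length), (p.get ⟨i, h⟩).1 = 1)
  · -- descent case
    set d := Nat.find hex with hd
    obtain ⟨hdlt, hd1⟩ := Nat.find_spec hex
    have hd1' : p.get ⟨d, hdlt⟩ = (1, d - 1) := by
      rcases hP d hdlt with he | ⟨he, _⟩
      · rw [he] at hd1; simp at hd1
      · exact he
    have hdpos : 1 ≤ d := by
      by_contra hcon
      have h0d : d = 0 := by omega
      have e1 : p.get ⟨d, hdlt⟩ = (0, 0) := by
        have he : (⟨d, hdlt⟩ : Fin p.length) = ⟨0, hL⟩ := by simp [h0d]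
        rw [he]; exact hget0 hL
      rw [hd1'] at e1
      simp at e1
    have hdesc : ∀ i (h : i < p.length), p.get ⟨i, h⟩ = if i < d then ((0:ℕ), i) else (1, i - 1) := by
      intro i h
      split
      · next hid =>
        rcases hP i h with he | ⟨he, _⟩
        · exact he
        · exfalso
          exact Nat.find_min hex hid ⟨h, by rw [he]⟩
      · next hid =>
        exact hup d hdlt (by rw [hd1']) i h (by omega)
    -- last cell
    have hL2 : p.length - 1 < p.length := by omega
    have hcl : cl = p.get ⟨p.length - 1, hL2⟩ := by
      rw [List.getLast?_eq_getLast_of_ne_nil hne] at hlast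
      have := Option.some_injective _ hlast.symm
      rw [this, List.getLast_eq_getElem]
      rfl
    have hdle : d ≤ p.length - 1 := by omega
    have hlast1 : cl = (1, p.length - 1 - 1) := by
      rw [hcl, hdesc (p.length - 1) hL2]
      rw [if_neg (by omega)]
    obtain ⟨hcmem, hcr, hcb⟩ := hcorner
    rw [hlast1] at hcmem hcr
    have hm1 : p.length - 1 - 1 < m := (h1 _).mp hcmem
    have hm2 : ¬ (p.length - 1 - 1 + 1 < m) := fun hc => hcr ((h1 _).mpr hc)
    have hlen : p.length = m + 1 := by omega
    exact ⟨d, hdpos, by omega, hdesc, Or.inr ⟨by omega, hlen⟩⟩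
  · -- no descent
    push_neg at hex
    have hdesc : ∀ i (h : i < p.length), p.get ⟨i, h⟩ = ((0:ℕ), i) := by
      intro i h
      rcases hP i h with he | ⟨he, _⟩
      · exact he
      · exfalso; exact hex i h (by rw [he])
    have hL2 : p.length - 1 < p.length := by omega
    have hcl : cl = p.get ⟨p.length - 1, hL2⟩ := by
      rw [List.getLast?_eq_getLast_of_ne_nil hne] at hlast
      have := Option.some_injective _ hlast.symm
      rw [this, List.getLast_eq_getElem]
      rfl
    have hlast1 : cl = (0, p.length - 1) := by rw [hcl, hdesc (p.length - 1) hL2]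
    obtain ⟨hcmem, hcr, hcb⟩ := hcorner
    rw [hlast1] at hcmem hcr
    have hm1 : p.length - 1 < K := (h0 _).mp hcmem
    have hm2 : ¬ (p.length - 1 + 1 < K) := fun hc => hcr ((h0 _).mpr hc)
    have hlen : p.length = K := by omega
    refine ⟨p.length, by omega, le_rfl, ?_, Or.inl ⟨rfl, hlen⟩⟩
    intro i h
    rw [if_pos h]
    exact hdesc i h
lemma SYT.inj {μ : YoungDiagram} (T : SYT μ) {c c' : ℕ × ℕ} (hc : c ∈ μ) (hc' : c' ∈ μ)
    (h : T.entry c.1 c.2 = T.entry c'.1 c'.2) : c = c' := by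
  have h1 := T.mem_range c.1 c.2 hc
  obtain ⟨u, _, huniq⟩ := T.bij _ h1.1 h1.2
  rw [huniq c ⟨hc, rfl⟩, huniq c' ⟨hc', h.symm⟩]

lemma SYT.row_mono {μ : YoungDiagram} (T : SYT μ) {i j1 j2 : ℕ} (h : j1 ≤ j2)
    (hm : (i, j2) ∈ μ) : T.entry i j1 ≤ T.entry i j2 := by
  rcases Nat.eq_or_lt_of_le h with rfl | h
  · exact le_rfl
  · exact le_of_lt (T.row_strict i j1 j2 h hm)

lemma cellbox_card (a b : ℕ) :
    (((Finset.range a).image fun j => ((0:ℕ), j)) ∪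
      ((Finset.range b).image fun j => ((1:ℕ), j))).card = a + b := by
  rw [Finset.card_union_of_disjoint, Finset.card_image_of_injective, Finset.card_image_of_injective,
    Finset.card_range, Finset.card_range]
  · intro x y hxy; simpa using hxy
  · intro x y hxy; simpa using hxy
  · rw [Finset.disjoint_left]
    rintro ⟨x1, x2⟩ hx hy
    simp only [Finset.mem_image, Finset.mem_range, Prod.mk.injEq] at hx hy
    obtain ⟨_, _, h1, _⟩ := hx
    obtain ⟨_, _, h2, _⟩ := hy
    omega

lemma card_le_of_entries_le {μ : YoungDiagram} (T : SYT μ) (S : Finset (ℕ × ℕ))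
    (hS : ∀ x ∈ S, x ∈ μ) (M : ℕ) (hM : ∀ x ∈ S, T.entry x.1 x.2 ≤ M) : S.card ≤ M := by
  have hinj : Set.InjOn (fun x : ℕ × ℕ => T.entry x.1 x.2) S :=
    fun x hx y hy h => T.inj (hS x hx) (hS y hy) h
  calc S.card = (S.image fun x => T.entry x.1 x.2).card := (Finset.card_image_of_injOn hinj).symm
    _ ≤ (Finset.Icc 1 M).card := by
        apply Finset.card_le_card
        intro v hv
        simp only [Finset.mem_image] at hv
        obtain ⟨x, hx, rfl⟩ := hv
        exact Finset.mem_Icc.mpr ⟨(T.mem_range x.1 x.2 (hS x hx)).1, hM x hx⟩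
    _ = M := by simp

section tworow
variable {μ : YoungDiagram} {K m : ℕ} (T : SYT μ)
variable (h0 : ∀ j, ((0:ℕ), j) ∈ μ ↔ j < K) (h1 : ∀ j, ((1:ℕ), j) ∈ μ ↔ j < m)
variable (h2 : ∀ i j, 2 ≤ i → (i, j) ∉ μ) (hKm : m + 1 ≤ K)

include h0 h1 h2 in
lemma two_row_card : μ.card = K + m := by
  have hcells : μ.cells = ((Finset.range K).image fun j => ((0:ℕ), j)) ∪
      ((Finset.range m).image fun j => ((1:ℕ), j)) := by
    ext ⟨i, j⟩
    rw [YoungDiagram.mem_cells]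
    simp only [Finset.mem_union, Finset.mem_image, Finset.mem_range, Prod.mk.injEq]
    constructor
    · intro h
      match i with
      | 0 => exact Or.inl ⟨j, (h0 j).mp h, rfl, rfl⟩
      | 1 => exact Or.inr ⟨j, (h1 j).mp h, rfl, rfl⟩
      | (k+2) => exact absurd h (h2 _ j (by omega))
    · rintro (⟨a, ha, rfl, rfl⟩ | ⟨a, ha, rfl, rfl⟩)
      · exact (h0 a).mpr ha
      · exact (h1 a).mpr ha
  show μ.cells.card = K + m
  rw [hcells, cellbox_card]

include h0 h1 h2 hKm in
lemma entry_lb {t : ℕ} (ht : t < m) : 2 * t + 2 ≤ T.entry 1 t := by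
  have hbox := card_le_of_entries_le T
    (((Finset.range (t+1)).image fun j => ((0:ℕ), j)) ∪
      ((Finset.range (t+1)).image fun j => ((1:ℕ), j)))
    ?_ (T.entry 1 t) ?_
  · rw [cellbox_card] at hbox; omega
  · rintro ⟨x1, x2⟩ hx
    simp only [Finset.mem_union, Finset.mem_image, Finset.mem_range, Prod.mk.injEq] at hx
    rcases hx with ⟨a, ha, rfl, rfl⟩ | ⟨a, ha, rfl, rfl⟩
    · exact (h0 a).mpr (by omega)
    · exact (h1 a).mpr (by omega)
  · rintro ⟨x1, x2⟩ hx
    simp only [Finset.mem_union, Finset.mem_image, Finset.mem_range, Prod.mk.injEq] at hx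
    rcases hx with ⟨a, ha, rfl, rfl⟩ | ⟨a, ha, rfl, rfl⟩
    · show T.entry 0 a ≤ T.entry 1 t
      calc T.entry 0 a ≤ T.entry 0 t := T.row_mono (by omega) ((h0 t).mpr (by omega))
        _ ≤ T.entry 1 t := le_of_lt (T.col_strict 0 1 t (by omega) ((h1 t).mpr ht))
    · show T.entry 1 a ≤ T.entry 1 t
      exact T.row_mono (by omega) ((h1 t).mpr ht)

include h0 h1 h2 hKm in
lemma no_touch {t : ℕ} (ht : t < m)
    (hlt : ∀ i, i ≤ t → T.entry 0 (i+1) < T.entry 1 i) : T.entry 1 t ≠ 2 * t + 2 := by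
  intro heq
  have hbox := card_le_of_entries_le T
    (((Finset.range (t+2)).image fun j => ((0:ℕ), j)) ∪
      ((Finset.range t).image fun j => ((1:ℕ), j)))
    ?_ (2 * t + 1) ?_
  · rw [cellbox_card] at hbox; omega
  · rintro ⟨x1, x2⟩ hx
    simp only [Finset.mem_union, Finset.mem_image, Finset.mem_range, Prod.mk.injEq] at hx
    rcases hx with ⟨a, ha, rfl, rfl⟩ | ⟨a, ha, rfl, rfl⟩
    · exact (h0 a).mpr (by omega)
    · exact (h1 a).mpr (by omega)
  · rintro ⟨x1, x2⟩ hx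
    simp only [Finset.mem_union, Finset.mem_image, Finset.mem_range, Prod.mk.injEq] at hx
    rcases hx with ⟨a, ha, rfl, rfl⟩ | ⟨a, ha, rfl, rfl⟩
    · show T.entry 0 a ≤ 2 * t + 1
      have h1' : T.entry 0 a ≤ T.entry 0 (t+1) := T.row_mono (by omega) ((h0 (t+1)).mpr (by omega))
      have h2' := hlt t le_rfl
      omega
    · show T.entry 1 a ≤ 2 * t + 1
      have h1' : T.entry 1 a < T.entry 1 t := T.row_strict 1 a t (by omega) ((h1 t).mpr ht)
      omega

include h0 h1 h2 hKm in
lemma touch_eq {t : ℕ} (ht : t < m) (hcard : μ.card = K + m)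
    (hlt : ∀ i, i < t → T.entry 0 (i+1) < T.entry 1 i)
    (hdes : T.entry 1 t < T.entry 0 (t+1)) : T.entry 1 t = 2 * t + 2 := by
  have hlb := entry_lb T h0 h1 h2 hKm ht
  have hub : T.entry 1 t ≤ 2 * t + 2 := by
    have hicc : Finset.Icc 1 (T.entry 1 t) ⊆
        ((((Finset.range (t+1)).image fun j => ((0:ℕ), j)) ∪
          ((Finset.range (t+1)).image fun j => ((1:ℕ), j))).image
            fun x => T.entry x.1 x.2) := by
      intro v hv
      rw [Finset.mem_Icc] at hv
      have hvcard : v ≤ μ.card := le_trans hv.2 (T.mem_range 1 t ((h1 t).mpr ht)).2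
      obtain ⟨⟨x1, x2⟩, ⟨hmem, hval⟩, -⟩ := T.bij v hv.1 hvcard
      have hx1 : x1 ≤ 1 := by
        by_contra hc
        exact h2 x1 x2 (by omega) hmem
      simp only [Finset.mem_image, Finset.mem_union, Finset.mem_range, Prod.mk.injEq]
      interval_cases x1
      · have hx2 : x2 ≤ t := by
          by_contra hc
          have : T.entry 0 (t+1) ≤ T.entry 0 x2 := T.row_mono (by omega) hmem
          simp only at hval
          omega
        exact ⟨(0, x2), Or.inl ⟨x2, by omega, rfl⟩, hval⟩
      · have hx2 : x2 ≤ t := by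
          by_contra hc
          have hx2m : x2 < m := (h1 x2).mp hmem
          have : T.entry 1 t < T.entry 1 x2 := T.row_strict 1 t x2 (by omega) hmem
          simp only at hval
          omega
        exact ⟨(1, x2), Or.inr ⟨x2, by omega, rfl⟩, hval⟩
    have := Finset.card_le_card hicc
    have himg := Finset.card_image_le (s := (((Finset.range (t+1)).image fun j => ((0:ℕ), j)) ∪
          ((Finset.range (t+1)).image fun j => ((1:ℕ), j)))) (f := fun x : ℕ × ℕ => T.entry x.1 x.2)
    rw [cellbox_card] at himg
    rw [Nat.card_Icc] at this
    omega
  omega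
end tworow

lemma enum_run (B : Finset ℕ) (b : ℕ → ℕ) (m t len : ℕ) (hlm : len ≤ m)
    (hbB : ∀ j, j < m → b j ∈ B)
    (hpos : ∀ j, j < m → (B.filter (fun x => x ≤ b j)).card = j + 1)
    (hfil : B.filter (fun x => x < t + len) = Finset.Ico t (t + len)) :
    ∀ i, i < len → b i = t + i := by
  intro i hi
  have hbBi : b i ∈ B := hbB i (by omega)
  have hlow : b i < t + len := by
    by_contra hc
    have hsub : insert (b i) (Finset.Ico t (t + len)) ⊆ B.filter (fun x => x ≤ b i) := by
      intro x hx
      rcases Finset.mem_insert.mp hx with rfl | hx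
      · exact Finset.mem_filter.mpr ⟨hbBi, le_rfl⟩
      · have hx2 := Finset.mem_Ico.mp hx
        rw [← hfil] at hx
        exact Finset.mem_filter.mpr ⟨(Finset.mem_filter.mp hx).1, by omega⟩
    have hcard := Finset.card_le_card hsub
    rw [Finset.card_insert_of_notMem (by simp; omega), hpos i (by omega), Nat.card_Ico] at hcard
    omega
  have heq : B.filter (fun x => x ≤ b i) = Finset.Icc t (b i) := by
    ext x
    simp only [Finset.mem_filter, Finset.mem_Icc]
    constructor
    · rintro ⟨hxB, hxle⟩
      have hx : x ∈ B.filter (fun x => x < t + len) := Finset.mem_filter.mpr ⟨hxB, by omega⟩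
      rw [hfil, Finset.mem_Ico] at hx
      omega
    · rintro ⟨hx1, hx2⟩
      have hx : x ∈ Finset.Ico t (t + len) := Finset.mem_Ico.mpr ⟨hx1, by omega⟩
      rw [← hfil] at hx
      exact ⟨(Finset.mem_filter.mp hx).1, hx2⟩
  have hp := hpos i (by omega)
  rw [heq, Nat.card_Icc] at hp
  have hbit : t ≤ b i := by
    have hx : b i ∈ Finset.Icc t (b i) := by
      rw [← heq]; exact Finset.mem_filter.mpr ⟨hbBi, le_rfl⟩
    exact (Finset.mem_Icc.mp hx).1
  omega

lemma pos_lemma {μ : YoungDiagram} (T : SYT μ) {m : ℕ}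
    (h1 : ∀ j, ((1:ℕ), j) ∈ μ ↔ j < m) {j : ℕ} (hj : j < m) :
    (((Finset.range m).image fun i => T.entry 1 i).filter
      (fun x => x ≤ T.entry 1 j)).card = j + 1 := by
  have hmono : ∀ a bb, a < bb → bb < m → T.entry 1 a < T.entry 1 bb :=
    fun a bb h hb => T.row_strict 1 a bb h ((h1 bb).mpr hb)
  have heq : (((Finset.range m).image fun i => T.entry 1 i).filter
      (fun x => x ≤ T.entry 1 j)) = (Finset.range (j+1)).image fun i => T.entry 1 i := by
    ext x
    simp only [Finset.mem_filter, Finset.mem_image, Finset.mem_range]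
    constructor
    · rintro ⟨⟨a, ha, rfl⟩, hle⟩
      refine ⟨a, ?_, rfl⟩
      by_contra hc
      have := hmono j a (by omega) ha
      omega
    · rintro ⟨a, ha, rfl⟩
      refine ⟨⟨a, by omega, rfl⟩, ?_⟩
      rcases Nat.eq_or_lt_of_le (by omega : a ≤ j) with rfl | hlt
      · exact le_rfl
      · exact le_of_lt (hmono a j hlt hj)
  rw [heq, Finset.card_image_of_injOn, Finset.card_range]
  intro a ha bb hb hab
  simp only [Finset.coe_range, Set.mem_Iio] at ha hb
  by_contra hne
  rcases Nat.lt_or_ge a bb with h | h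
  · exact absurd hab (ne_of_lt (hmono a bb h (by omega)))
  · exact absurd hab.symm (ne_of_lt (hmono bb a (by omega) (by omega)))

lemma image_pred_Ico (a bnd : ℕ) (ha : 1 ≤ a) :
    (Finset.Ico a bnd).image (fun x => x - 1) = Finset.Ico (a-1) (bnd-1) := by
  ext x
  simp only [Finset.mem_image, Finset.mem_Ico]
  constructor
  · rintro ⟨y, ⟨hy1, hy2⟩, rfl⟩
    omega
  · intro h
    exact ⟨x + 1, by omega, by omega⟩

lemma zval_sub {M : ℕ} {a b : ℕ} (hab : a ≤ b) (hlt : b - a < M) :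
    (((b : ZMod M) - (a : ZMod M)).val) = b - a := by
  have h : (b : ZMod M) - a = ((b - a : ℕ) : ZMod M) := by
    rw [Nat.cast_sub hab]
  rw [h, ZMod.val_natCast, Nat.mod_eq_of_lt hlt]
/-- for `n ≥ (2r+1)ℓ`, the set `T(n,ℓ,r)` of two-row standard Young tableaux
(shape `(n - rℓ, rℓ)`) is closed under promotion. -/
theorem stmt_8 (n ℓ r : ℕ) (hℓ : 0 < ℓ) (hr : 0 < r) (hn : (2 * r + 1) * ℓ ≤ n)
    (μ : YoungDiagram)
    (h0 : ∀ j, (0, j) ∈ μ ↔ j < n - r * ℓ)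
    (h1 : ∀ j, (1, j) ∈ μ ↔ j < r * ℓ)
    (h2 : ∀ i j, 2 ≤ i → (i, j) ∉ μ)
    (T : SYT μ) (hT : InTnlr n ℓ r T)
    (S : SYT μ) (hS : IsPromotion μ T S) :
    InTnlr n ℓ r S := by
  obtain ⟨st, A, hshape, hdisj, hBA, hgap⟩ := hT
  have hrl : (2 * r + 1) * ℓ = 2 * (r * ℓ) + ℓ := by ring
  have hrll : ℓ ≤ r * ℓ := Nat.le_mul_of_pos_left ℓ hr
  have hmpos : 1 ≤ r * ℓ := by omega
  have hKm : r * ℓ + 1 ≤ n - r * ℓ := by omega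
  have hcard : μ.card = n := by
    have h := two_row_card h0 h1 h2
    omega
  -- promotion data
  obtain ⟨p, hpath, hoff, hrel, cl2, hlast2, hclval⟩ := hS
  obtain ⟨d, hd1, hdlen, hdesc, hcase⟩ := slide_path_struct hmpos hKm h0 h1 h2 hpath
  obtain ⟨hhead, hchain, -⟩ := hpath
  have hne : p ≠ [] := by intro h; rw [h] at hhead; simp at hhead
  -- basic entry facts
  have hB2 : ∀ j, j < r * ℓ → 2 ≤ T.entry 1 j := by
    intro j hj
    have hc := T.col_strict 0 1 j (by omega) ((h1 j).mpr hj)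
    have hm := (T.mem_range 0 j ((h0 j).mpr (by omega))).1
    omega
  have hBn : ∀ j, j < r * ℓ → T.entry 1 j ≤ n := by
    intro j hj
    have := (T.mem_range 1 j ((h1 j).mpr hj)).2
    omega
  have hbmono : ∀ j1 j2, j1 < j2 → j2 < r * ℓ → T.entry 1 j1 < T.entry 1 j2 :=
    fun j1 j2 h hj => T.row_strict 1 j1 j2 h ((h1 j2).mpr hj)
  -- path membership
  have hnot1 : ∀ j, (j + 1 < d ∨ d = p.length) → ((1:ℕ), j) ∉ p := by
    intro j hj hmem
    obtain ⟨⟨i, hi⟩, hget⟩ := List.mem_iff_get.mp hmem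
    rw [hdesc i hi] at hget
    split at hget
    · exact absurd (congrArg Prod.fst hget) (by simp)
    · next hcond =>
      have := congrArg Prod.snd hget
      simp only at this
      omega
  -- basic slide inequalities
  have hineq0 : ∀ i, i + 1 < d → i < r * ℓ → T.entry 0 (i+1) < T.entry 1 i := by
    intro i hid him
    have hs : SlideStep μ T (p.get ⟨i, by omega⟩) (p.get ⟨i+1, by omega⟩) :=
      List.isChain_iff_getElem.mp hchain i (by omega)
    rw [hdesc i (by omega), hdesc (i+1) (by omega)] at hs
    rw [if_pos (by omega), if_pos (by omega)] at hs
    obtain ⟨-, -, hmin⟩ := hs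
    have hle : T.entry 0 (i+1) ≤ T.entry 1 i :=
      hmin (1, i) (Or.inr rfl) ((h1 i).mpr him)
    have hne' : T.entry 0 (i+1) ≠ T.entry 1 i := by
      intro he
      have := T.inj (c := (0, i+1)) (c' := (1, i))
        ((h0 (i+1)).mpr (by omega)) ((h1 i).mpr him) he
      exact absurd (congrArg Prod.fst this) (by simp)
    omega
  -- the B set
  set B : Finset ℕ := (Finset.range (r * ℓ)).image (fun j => T.entry 1 j) with hBdef
  have hbB : ∀ j, j < r * ℓ → T.entry 1 j ∈ B :=
    fun j hj => Finset.mem_image.mpr ⟨j, Finset.mem_range.mpr hj, rfl⟩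
  have hpos : ∀ j, j < r * ℓ → (B.filter (fun x => x ≤ T.entry 1 j)).card = j + 1 :=
    fun j hj => pos_lemma T h1 hj
  have hAsub : ∀ i, A i ⊆ B := by
    intro i
    rw [← hBA]
    exact Finset.subset_biUnion_of_mem A (Finset.mem_univ i)
  have hA2 : ∀ i, ∀ x ∈ A i, 2 ≤ x ∧ x ≤ n := by
    intro i x hx
    have hxB := hAsub i hx
    rw [hBdef] at hxB
    obtain ⟨j, hj, rfl⟩ := Finset.mem_image.mp hxB
    rw [Finset.mem_range] at hj
    exact ⟨hB2 j hj, hBn j hj⟩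
  have hstpos : ∀ i, 2 ≤ st i := by
    intro i
    rcases hshape i with hni | ⟨k, hk1, hk2, hstk, hAk⟩
    · have : st i ∈ A i := by rw [hni]; exact Finset.mem_Ico.mpr ⟨le_rfl, by omega⟩
      exact (hA2 i _ this).1
    · omega
  have hwrap_excl : ∀ i1 k, 1 ≤ k → k + 1 ≤ ℓ → st i1 = n - ℓ + k + 1 →
      A i1 = Finset.Ico (k+1) (2*k+1) ∪ Finset.Ico (n-ℓ+k+1) (n+1) →
      (∀ i', i' ≠ i1 → A i' = Finset.Ico (st i') (st i' + ℓ) ∧ 2*k+1 ≤ st i') := by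
    intro i1 k hk1 hk2 hstk hAk i' hne'
    have hnorm : A i' = Finset.Ico (st i') (st i' + ℓ) := by
      rcases hshape i' with h | ⟨k2, hk21, hk22, hstk2, hAk2⟩
      · exact h
      · exfalso
        have hn1 : n ∈ A i1 := by
          rw [hAk]
          exact Finset.mem_union_right _ (Finset.mem_Ico.mpr ⟨by omega, by omega⟩)
        have hn2 : n ∈ A i' := by
          rw [hAk2]
          exact Finset.mem_union_right _ (Finset.mem_Ico.mpr ⟨by omega, by omega⟩)
        exact Finset.disjoint_left.mp (hdisj i' i1 hne') hn2 hn1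
    have hcast : ((st i1 : ℕ) : ZMod (n - ℓ)) = ((k+1 : ℕ) : ZMod (n - ℓ)) := by
      rw [hstk]
      have he : n - ℓ + k + 1 = (n - ℓ) + (k+1) := by omega
      rw [he, Nat.cast_add, ZMod.natCast_self, zero_add]
    have hgap1 := hgap i' i1 hne'
    rw [hcast] at hgap1
    have hst1 : k + 1 ≤ st i' := by
      by_contra hc
      push_neg at hc
      have hv := zval_sub (M := n - ℓ) (a := st i') (b := k+1) (by omega) (by omega)
      rw [hv] at hgap1
      omega
    have hst2 : 2*k+1 ≤ st i' := by
      by_contra hc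
      push_neg at hc
      have hm1 : st i' ∈ A i1 := by
        rw [hAk]
        exact Finset.mem_union_left _ (Finset.mem_Ico.mpr ⟨by omega, by omega⟩)
      have hm2 : st i' ∈ A i' := by
        rw [hnorm]
        exact Finset.mem_Ico.mpr ⟨le_rfl, by omega⟩
      exact Finset.disjoint_left.mp (hdisj i' i1 hne') hm2 hm1
    exact ⟨hnorm, hst2⟩
  have hwrapfil : ∀ i1 k, 1 ≤ k → k + 1 ≤ ℓ → st i1 = n - ℓ + k + 1 →
      A i1 = Finset.Ico (k+1) (2*k+1) ∪ Finset.Ico (n-ℓ+k+1) (n+1) →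
      B.filter (fun x => x < (k+1) + k) = Finset.Ico (k+1) ((k+1) + k) := by
    intro i1 k hk1 hk2 hstk hAk
    ext x
    rw [Finset.mem_filter, Finset.mem_Ico]
    constructor
    · rintro ⟨hxB, hxlt⟩
      rw [← hBA] at hxB
      obtain ⟨i', -, hxi⟩ := Finset.mem_biUnion.mp hxB
      by_cases hii : i' = i1
      · subst hii
        rw [hAk] at hxi
        rcases Finset.mem_union.mp hxi with hxi | hxi
        · have := Finset.mem_Ico.mp hxi
          omega
        · have := Finset.mem_Ico.mp hxi
          omega
      · have hw := hwrap_excl i1 k hk1 hk2 hstk hAk i' hii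
        rw [hw.1] at hxi
        have := Finset.mem_Ico.mp hxi
        have := hw.2
        omega
    · intro hx
      refine ⟨hAsub i1 ?_, by omega⟩
      rw [hAk]
      exact Finset.mem_union_left _ (Finset.mem_Ico.mpr ⟨by omega, by omega⟩)
  -- case split on the path shape
  rcases hcase with ⟨hdL, hLK⟩ | ⟨hdm, hLm⟩
  · -- no descent
    have hineq : ∀ i, i < r * ℓ → T.entry 0 (i+1) < T.entry 1 i := by
      intro i him
      exact hineq0 i (by omega) him
    have hSrow : ∀ j, j < r * ℓ → S.entry 1 j = T.entry 1 j - 1 := by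
      intro j hj
      exact hoff (1, j) ((h1 j).mpr hj) (hnot1 j (Or.inr hdL))
    have hallnormal : ∀ i, A i = Finset.Ico (st i) (st i + ℓ) := by
      intro i
      rcases hshape i with hni | ⟨k, hk1, hk2, hstk, hAk⟩
      · exact hni
      · exfalso
        have hfil := hwrapfil i k hk1 hk2 hstk hAk
        have henum := enum_run B (fun j => T.entry 1 j) (r * ℓ) (k+1) k (by omega) hbB hpos hfil
        have hbk : T.entry 1 (k-1) = (k+1) + (k-1) := henum (k-1) (by omega)
        have hnt := no_touch T h0 h1 h2 hKm (t := k - 1) (by omega)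
          (fun i' hi' => hineq i' (by omega))
        omega
    refine ⟨fun i => st i - 1, fun i => (A i).image (fun x => x - 1), ?_, ?_, ?_, ?_⟩
    · intro i
      left
      show Finset.image (fun x => x - 1) (A i) = Finset.Ico (st i - 1) (st i - 1 + ℓ)
      have harg : st i + ℓ - 1 = st i - 1 + ℓ := by have := hstpos i; omega
      rw [hallnormal i, image_pred_Ico _ _ (by have := hstpos i; omega), harg]
    · intro i j hij
      rw [Finset.disjoint_left]
      intro x hx1 hx2
      obtain ⟨y, hy, hyx⟩ := Finset.mem_image.mp hx1
      obtain ⟨z, hz, hzx⟩ := Finset.mem_image.mp hx2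
      have hy2 := (hA2 i y hy).1
      have hz2 := (hA2 j z hz).1
      have hyz : y = z := by omega
      subst hyz
      exact Finset.disjoint_left.mp (hdisj i j hij) hy hz
    · have himg := Finset.biUnion_image (s := Finset.univ) (t := A) (f := fun x => x - 1)
      rw [hBA] at himg
      show Finset.univ.biUnion (fun i => (A i).image (fun x => x - 1)) =
        Finset.image (fun j => S.entry 1 j) (Finset.range (r * ℓ))
      rw [← himg, hBdef]
      ext x
      simp only [Finset.mem_image, Finset.mem_range]
      constructor
      · rintro ⟨y, ⟨j, hj, rfl⟩, rfl⟩
        exact ⟨j, hj, hSrow j hj⟩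
      · rintro ⟨j, hj, rfl⟩
        exact ⟨T.entry 1 j, ⟨j, hj, rfl⟩, (hSrow j hj).symm⟩
    · intro i j hij
      have hgap1 := hgap i j hij
      have hci : ((st i - 1 : ℕ) : ZMod (n - ℓ)) = (st i : ZMod (n-ℓ)) - 1 := by
        rw [Nat.cast_sub (show 1 ≤ st i by have := hstpos i; omega), Nat.cast_one]
      have hcj : ((st j - 1 : ℕ) : ZMod (n - ℓ)) = (st j : ZMod (n-ℓ)) - 1 := by
        rw [Nat.cast_sub (show 1 ≤ st j by have := hstpos j; omega), Nat.cast_one]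
      rw [hci, hcj, sub_sub_sub_cancel_right]
      exact hgap1
  · -- descent case
    have hjs : d - 1 < r * ℓ := by omega
    have hLm' : p.length = r * ℓ + 1 := hLm
    have hdes : T.entry 1 (d-1) < T.entry 0 ((d-1)+1) := by
      have hs : SlideStep μ T (p.get ⟨d-1, by omega⟩) (p.get ⟨d-1+1, by omega⟩) :=
        List.isChain_iff_getElem.mp hchain (d-1) (by omega)
      rw [hdesc (d-1) (by omega), hdesc (d-1+1) (by omega)] at hs
      rw [if_pos (by omega), if_neg (by omega)] at hs
      obtain ⟨-, -, hmin⟩ := hs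
      have hle : T.entry 1 (d-1+1-1) ≤ T.entry 0 ((d-1)+1) :=
        hmin (0, (d-1) + 1) (Or.inl rfl) ((h0 _).mpr (by omega))
      have e1 : d - 1 + 1 - 1 = d - 1 := by omega
      rw [e1] at hle
      have hne' : T.entry 1 (d-1) ≠ T.entry 0 ((d-1)+1) := by
        intro he
        have := T.inj (c := (1, d-1)) (c' := (0, (d-1)+1))
          ((h1 (d-1)).mpr hjs) ((h0 ((d-1)+1)).mpr (by omega)) he
        exact absurd (congrArg Prod.fst this) (by simp)
      omega
    have hineq_lt : ∀ i, i < d - 1 → T.entry 0 (i+1) < T.entry 1 i :=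
      fun i hi => hineq0 i (by omega) (by omega)
    have htouch : T.entry 1 (d-1) = 2 * (d-1) + 2 :=
      touch_eq T h0 h1 h2 hKm hjs (by omega) hineq_lt hdes
    have hnt : ∀ i, i < d - 1 → T.entry 1 i ≠ 2*i+2 :=
      fun i hi => no_touch T h0 h1 h2 hKm (by omega) (fun i' hi' => hineq_lt i' (by omega))
    have hSlow : ∀ j, j < d - 1 → S.entry 1 j = T.entry 1 j - 1 :=
      fun j hj => hoff (1, j) ((h1 j).mpr (by omega)) (hnot1 j (Or.inl (by omega)))
    have hShigh : ∀ j, d - 1 ≤ j → j < r * ℓ - 1 → S.entry 1 j = T.entry 1 (j+1) - 1 := by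
      intro j hj1 hj2
      have hs : (fun c c' : ℕ × ℕ => S.entry c.1 c.2 = T.entry c'.1 c'.2 - 1) (p.get ⟨j+1, by omega⟩) (p.get ⟨j+1+1, by omega⟩) :=
        List.isChain_iff_getElem.mp hrel (j+1) (by omega)
      rw [hdesc (j+1) (by omega), hdesc (j+2) (by omega)] at hs
      rw [if_neg (by omega), if_neg (by omega)] at hs
      have hs' : S.entry 1 (j+1-1) = T.entry 1 (j+2-1) - 1 := hs
      have e1 : j + 1 - 1 = j := by omega
      have e2 : j + 2 - 1 = j + 1 := by omega
      rw [e1, e2] at hs'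
      exact hs'
    have hSlast : S.entry 1 (r * ℓ - 1) = n := by
      have hL2 : p.length - 1 < p.length := by omega
      have hcl : cl2 = p.get ⟨p.length - 1, hL2⟩ := by
        rw [List.getLast?_eq_getLast_of_ne_nil hne] at hlast2
        have := Option.some_injective _ hlast2.symm
        rw [this, List.getLast_eq_getElem]
        rfl
      rw [hdesc _ hL2, if_neg (by omega)] at hcl
      have hclval' : S.entry cl2.1 cl2.2 = n := by rw [hclval, hcard]
      rw [hcl] at hclval'
      have e1 : p.length - 1 - 1 = r * ℓ - 1 := by omega
      have hclval'' : S.entry 1 (p.length - 1 - 1) = n := hclval'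
      rw [e1] at hclval''
      exact hclval''
    -- identification of the special run
    have hident : ∃ i0 k, 1 ≤ k ∧ k ≤ ℓ ∧
        A i0 = Finset.Ico (k+1) (2*k+1) ∪ Finset.Ico (n-ℓ+k+1) (n+1) ∧
        ((st i0 : ZMod (n-ℓ)) = ((k+1 : ℕ) : ZMod (n-ℓ))) ∧
        d - 1 = k - 1 ∧ T.entry 1 (d-1) = 2*k ∧
        (∀ i, i ≠ i0 → A i = Finset.Ico (st i) (st i + ℓ)) := by
      by_cases hex : ∃ i1, ∃ k, 1 ≤ k ∧ k + 1 ≤ ℓ ∧ st i1 = n - ℓ + k + 1 ∧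
          A i1 = Finset.Ico (k + 1) (2 * k + 1) ∪ Finset.Ico (n - ℓ + k + 1) (n + 1)
      · obtain ⟨i1, k, hk1, hk2, hstk, hAk⟩ := hex
        have hfil := hwrapfil i1 k hk1 hk2 hstk hAk
        have henum := enum_run B (fun j => T.entry 1 j) (r*ℓ) (k+1) k (by omega) hbB hpos hfil
        have hbk : T.entry 1 (k-1) = k+1+(k-1) := henum (k-1) (by omega)
        have hjseq : d - 1 = k - 1 := by
          rcases Nat.lt_trichotomy (d-1) (k-1) with hl | he | hg
          · have h' : T.entry 1 (d-1) = k+1+(d-1) := henum (d-1) (by omega)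
            omega
          · exact he
          · exact absurd hbk (by have := hnt (k-1) (by omega); omega)
        have hcast : ((st i1 : ℕ) : ZMod (n - ℓ)) = ((k+1 : ℕ) : ZMod (n - ℓ)) := by
          rw [hstk]
          have he : n - ℓ + k + 1 = (n - ℓ) + (k+1) := by omega
          rw [he, Nat.cast_add, ZMod.natCast_self, zero_add]
        refine ⟨i1, k, hk1, by omega, hAk, hcast, hjseq, by rw [hjseq]; omega, 
          fun i hi => (hwrap_excl i1 k hk1 hk2 hstk hAk i hi).1⟩
      · have hallnorm : ∀ i, A i = Finset.Ico (st i) (st i + ℓ) := by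
          intro i
          rcases hshape i with h | hcon
          · exact h
          · exact absurd ⟨i, hcon⟩ hex
        have hstmem : ∀ i, st i ∈ A i := fun i => by
          rw [hallnorm i]; exact Finset.mem_Ico.mpr ⟨le_rfl, by omega⟩
        have hstne : ∀ i j, i ≠ j → st i ≠ st j := by
          intro i j hij he
          exact Finset.disjoint_left.mp (hdisj i j hij) (hstmem i)
            (by rw [he]; exact hstmem j)
        have hstub : ∀ i, st i + ℓ ≤ n + 1 := by
          intro i
          have hmem : st i + ℓ - 1 ∈ A i := by
            rw [hallnorm i]; exact Finset.mem_Ico.mpr ⟨by omega, by omega⟩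
          have := (hA2 i _ hmem).2
          omega
        have hlin : ∀ i j, i ≠ j → st i < st j → st i + 2*ℓ ≤ st j := by
          intro i j hij hlt
          have hg := hgap i j hij
          have hv := zval_sub (M := n-ℓ) (a := st i) (b := st j) (by omega)
            (by have := hstub j; have := hstpos i; omega)
          rw [hv] at hg
          omega
        have hminB : ∀ x ∈ B, T.entry 1 0 ≤ x := by
          intro x hx
          rw [hBdef] at hx
          obtain ⟨j, hj, rfl⟩ := Finset.mem_image.mp hx
          rw [Finset.mem_range] at hj
          exact T.row_mono (by omega) ((h1 j).mpr hj)
        have hb0 : T.entry 1 0 ∈ Finset.univ.biUnion A := by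
          rw [hBA]; exact hbB 0 (by omega)
        obtain ⟨i2, -, hb0A⟩ := Finset.mem_biUnion.mp hb0
        have hsti2 : st i2 = T.entry 1 0 := by
          have h1' : st i2 ≤ T.entry 1 0 := by
            rw [hallnorm i2] at hb0A
            exact (Finset.mem_Ico.mp hb0A).1
          exact le_antisymm h1' (hminB (st i2) (hAsub i2 (hstmem i2)))
        have hfil2 : B.filter (fun x => x < st i2 + ℓ) = Finset.Ico (st i2) (st i2 + ℓ) := by
          ext x
          rw [Finset.mem_filter, Finset.mem_Ico]
          constructor
          · rintro ⟨hxB, hxlt⟩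
            have hxB' : x ∈ Finset.univ.biUnion A := by rw [hBA]; exact hxB
            obtain ⟨i', -, hxi⟩ := Finset.mem_biUnion.mp hxB'
            by_cases hii : i' = i2
            · subst hii
              rw [hallnorm i'] at hxi
              exact Finset.mem_Ico.mp hxi
            · exfalso
              have hge := hminB (st i') (hAsub i' (hstmem i'))
              have hne2 := hstne i2 i' (fun he => hii he.symm)
              have hlin2 := hlin i2 i' (fun he => hii he.symm) (by omega)
              rw [hallnorm i'] at hxi
              have := Finset.mem_Ico.mp hxi
              omega
          · intro hx
            refine ⟨hAsub i2 (by rw [hallnorm i2]; exact Finset.mem_Ico.mpr hx), by omega⟩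
        have henum2 := enum_run B (fun j => T.entry 1 j) (r*ℓ) (st i2) ℓ (by omega) hbB hpos hfil2
        have hlb := entry_lb T h0 h1 h2 hKm (t := ℓ-1) (by omega)
        have hbl1 : T.entry 1 (ℓ-1) = st i2 + (ℓ-1) := henum2 (ℓ-1) (by omega)
        have ht_lb : ℓ + 1 ≤ st i2 := by omega
        rcases Nat.lt_or_ge (d-1) ℓ with hcase2 | hcase2
        · have hbjs : T.entry 1 (d-1) = st i2 + (d-1) := henum2 (d-1) (by omega)
          have hjseq : d - 1 = ℓ - 1 := by omega
          have hsti2v : st i2 = ℓ + 1 := by omega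
          refine ⟨i2, ℓ, by omega, le_rfl, ?_, ?_, by omega, by omega,
            fun i _ => hallnorm i⟩
          · rw [hallnorm i2, hsti2v]
            have hemp : Finset.Ico (n - ℓ + ℓ + 1) (n+1) = ∅ := Finset.Ico_eq_empty (by omega)
            rw [hemp, Finset.union_empty]
            have e1 : ℓ + 1 + ℓ = 2 * ℓ + 1 := by omega
            rw [e1]
          · rw [hsti2v]
        · exfalso
          have heB : T.entry 1 (d-1) ∈ B := hbB (d-1) hjs
          have heB' : T.entry 1 (d-1) ∈ Finset.univ.biUnion A := by rw [hBA]; exact heB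
          obtain ⟨i0, -, heA⟩ := Finset.mem_biUnion.mp heB'
          have he1 : T.entry 1 (d-1) + 1 ∉ B := by
            intro hc
            have hc' := hc
            rw [hBdef] at hc'
            obtain ⟨j2, hj2, hbj2⟩ := Finset.mem_image.mp hc'
            rw [Finset.mem_range] at hj2
            have hins : B.filter (fun x => x ≤ T.entry 1 (d-1) + 1) =
                insert (T.entry 1 (d-1) + 1) (B.filter (fun x => x ≤ T.entry 1 (d-1))) := by
              ext y
              rw [Finset.mem_insert, Finset.mem_filter, Finset.mem_filter]
              constructor
              · rintro ⟨hyB, hy⟩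
                rcases Nat.eq_or_lt_of_le hy with h | h
                · exact Or.inl h
                · exact Or.inr ⟨hyB, by omega⟩
              · rintro (rfl | ⟨hyB, hy⟩)
                · exact ⟨hc, le_rfl⟩
                · exact ⟨hyB, by omega⟩
            have hcard2 := hpos j2 hj2
            rw [hbj2, hins, Finset.card_insert_of_notMem
              (by rw [Finset.mem_filter]; push_neg; intro _; omega),
              hpos (d-1) hjs] at hcard2
            have hlb2 := entry_lb T h0 h1 h2 hKm (t := j2) hj2
            omega
          have hend : T.entry 1 (d-1) = st i0 + ℓ - 1 := by
            rw [hallnorm i0] at heA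
            have hb := Finset.mem_Ico.mp heA
            by_contra hc
            have hmem : T.entry 1 (d-1) + 1 ∈ A i0 := by
              rw [hallnorm i0]; exact Finset.mem_Ico.mpr ⟨by omega, by omega⟩
            exact he1 (hAsub i0 hmem)
          set W := Finset.univ.filter (fun i : Fin r => st i < st i0) with hWdef
          have hmemW : ∀ i : Fin r, i ∈ W ↔ st i < st i0 := by
            intro i
            rw [hWdef, Finset.mem_filter]
            simp
          have hfiltE : B.filter (fun x => x ≤ T.entry 1 (d-1)) = A i0 ∪ W.biUnion A := by
            ext x
            rw [Finset.mem_filter, Finset.mem_union]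
            constructor
            · rintro ⟨hxB, hxle⟩
              have hxB' : x ∈ Finset.univ.biUnion A := by rw [hBA]; exact hxB
              obtain ⟨i', -, hxi⟩ := Finset.mem_biUnion.mp hxB'
              by_cases hii : i' = i0
              · subst hii; exact Or.inl hxi
              · right
                refine Finset.mem_biUnion.mpr ⟨i', (hmemW i').mpr ?_, hxi⟩
                by_contra hcc
                push_neg at hcc
                have hne2 := hstne i' i0 hii
                have hlin2 := hlin i0 i' (fun he => hii he.symm) (by omega)
                rw [hallnorm i'] at hxi
                have := Finset.mem_Ico.mp hxi
                omega
            · rintro (hx | hx)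
              · refine ⟨hAsub i0 hx, ?_⟩
                rw [hallnorm i0] at hx
                have := Finset.mem_Ico.mp hx
                omega
              · obtain ⟨i', hi'W, hxi⟩ := Finset.mem_biUnion.mp hx
                have hstlt : st i' < st i0 := (hmemW i').mp hi'W
                have h2l := hlin i' i0 (fun he => absurd hstlt (by rw [he]; omega)) hstlt
                refine ⟨hAsub i' hxi, ?_⟩
                rw [hallnorm i'] at hxi
                have := Finset.mem_Ico.mp hxi
                omega
          have hcardA : ∀ i : Fin r, (A i).card = ℓ := fun i => by
            rw [hallnorm i, Nat.card_Ico]; omega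
          have hcardW : (W.biUnion A).card = W.card * ℓ := by
            rw [Finset.card_biUnion (fun x _ y _ hxy => hdisj x y hxy)]
            rw [Finset.sum_congr rfl (fun x _ => hcardA x), Finset.sum_const, smul_eq_mul]
          have hdisjW : Disjoint (A i0) (W.biUnion A) := by
            rw [Finset.disjoint_biUnion_right]
            intro i hi
            have hstlt : st i < st i0 := (hmemW i).mp hi
            exact hdisj i0 i (fun he => absurd hstlt (by rw [he]; omega))
          have hcount : d - 1 + 1 = ℓ + W.card * ℓ := by
            have hp' := hpos (d-1) hjs
            rw [hfiltE, Finset.card_union_of_disjoint hdisjW, hcardA, hcardW] at hp'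
            omega
          set Sts := insert (st i0) (W.image st) with hStsdef
          have hstsmem : ∀ x ∈ Sts, ∃ i, st i = x ∧ x ≤ st i0 := by
            intro x hx
            rw [hStsdef] at hx
            rcases Finset.mem_insert.mp hx with rfl | hx
            · exact ⟨i0, rfl, le_rfl⟩
            · obtain ⟨i, hiW, rfl⟩ := Finset.mem_image.mp hx
              exact ⟨i, rfl, le_of_lt ((hmemW i).mp hiW)⟩
          have hcardSts : Sts.card = W.card + 1 := by
            rw [hStsdef, Finset.card_insert_of_notMem, Finset.card_image_of_injOn]
            · intro x hx y hy hxy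
              by_contra hne2
              exact hstne x y hne2 hxy
            · intro hc
              obtain ⟨i, hiW, hsti⟩ := Finset.mem_image.mp hc
              have := (hmemW i).mp hiW
              omega
          have hpackdisj : ∀ x ∈ Sts, ∀ y ∈ Sts, x ≠ y →
              Disjoint (Finset.Ico x (x + 2*ℓ)) (Finset.Ico y (y + 2*ℓ)) := by
            intro x hx y hy hxy
            obtain ⟨i, rfl, -⟩ := hstsmem x hx
            obtain ⟨j, rfl, -⟩ := hstsmem y hy
            have hij : i ≠ j := fun he => hxy (by rw [he])
            rw [Finset.disjoint_left]
            intro a ha hb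
            rw [Finset.mem_Ico] at ha hb
            rcases Nat.lt_or_ge (st i) (st j) with hl | hg
            · have := hlin i j hij hl
              omega
            · have hl2 : st j < st i := by
                have := hstne i j hij
                omega
              have := hlin j i (fun he => hij he.symm) hl2
              omega
          have hpack : Sts.biUnion (fun x => Finset.Ico x (x + 2*ℓ)) ⊆
              Finset.Ico (st i2) (st i0 + 2*ℓ) := by
            intro y hy
            obtain ⟨x, hxS, hyx⟩ := Finset.mem_biUnion.mp hy
            obtain ⟨i, rfl, hxle⟩ := hstsmem x hxS
            have hgei : T.entry 1 0 ≤ st i := hminB (st i) (hAsub i (hstmem i))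
            rw [Finset.mem_Ico] at hyx ⊢
            omega
          have hpackcard : (W.card + 1) * (2*ℓ) ≤ st i0 + 2*ℓ - st i2 := by
            have h1' := Finset.card_le_card hpack
            rw [Finset.card_biUnion hpackdisj] at h1'
            have hsum : (∑ x ∈ Sts, (Finset.Ico x (x + 2*ℓ)).card) = Sts.card * (2*ℓ) := by
              calc (∑ x ∈ Sts, (Finset.Ico x (x + 2*ℓ)).card)
                  = ∑ _x ∈ Sts, 2*ℓ :=
                    Finset.sum_congr rfl (fun x _ => by rw [Nat.card_Ico]; omega)
                _ = Sts.card * (2*ℓ) := by rw [Finset.sum_const, smul_eq_mul]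
            rw [hsum, hcardSts, Nat.card_Ico] at h1'
            omega
          have hexp : (W.card + 1) * (2*ℓ) = 2*(W.card * ℓ) + 2*ℓ := by ring
          have hnt2 := hnt (ℓ-1) (by omega)
          omega
    obtain ⟨i0, k, hk1, hkl, hAi0, hstcast, hjse, hbjs2k, hothers⟩ := hident
    have h2kA : 2*k ∈ A i0 := by
      rw [hAi0]
      exact Finset.mem_union_left _ (Finset.mem_Ico.mpr ⟨by omega, by omega⟩)
    have hSimage : (Finset.range (r*ℓ)).image (fun j => S.entry 1 j) =
        ((B.erase (2*k)).image (fun x => x - 1)) ∪ {n} := by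
      ext x
      simp only [Finset.mem_union, Finset.mem_image, Finset.mem_range, Finset.mem_erase,
        Finset.mem_singleton]
      constructor
      · rintro ⟨j, hj, rfl⟩
        by_cases hj1 : j < d - 1
        · left
          refine ⟨T.entry 1 j, ⟨?_, hbB j (by omega)⟩, (hSlow j hj1).symm⟩
          have := hbmono j (d-1) hj1 hjs
          omega
        · by_cases hj2 : j = r * ℓ - 1
          · right
            rw [hj2]
            exact hSlast
          · left
            refine ⟨T.entry 1 (j+1), ⟨?_, hbB (j+1) (by omega)⟩,
              (hShigh j (by omega) (by omega)).symm⟩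
            have := hbmono (d-1) (j+1) (by omega) (by omega)
            omega
      · rintro (⟨y, ⟨hy2k, hyB⟩, rfl⟩ | rfl)
        · rw [hBdef] at hyB
          obtain ⟨j', hj', hbj'⟩ := Finset.mem_image.mp hyB
          rw [Finset.mem_range] at hj'
          have hjne : j' ≠ d - 1 := by
            intro he
            rw [he, hbjs2k] at hbj'
            exact hy2k hbj'.symm
          rcases Nat.lt_or_ge j' (d-1) with hlt | hge
          · exact ⟨j', by omega, by rw [hSlow j' hlt, hbj']⟩
          · have hgt : d - 1 < j' := by omega
            refine ⟨j' - 1, by omega, ?_⟩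
            have := hShigh (j'-1) (by omega) (by omega)
            have e1 : j' - 1 + 1 = j' := by omega
            rw [e1] at this
            rw [this, hbj']
        · exact ⟨r * ℓ - 1, by omega, hSlast⟩
    refine ⟨fun i => if i = i0 then n - ℓ + k else st i - 1,
      fun i => if i = i0 then Finset.Ico k (2*k-1) ∪ Finset.Ico (n-ℓ+k) (n+1)
        else (A i).image (fun x => x - 1), ?_, ?_, ?_, ?_⟩
    · intro i
      dsimp only
      by_cases hii : i = i0
      · subst hii
        rw [if_pos rfl, if_pos rfl]
        by_cases hk1' : k = 1
        · left
          rw [hk1']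
          have e0 : (2*1-1 : ℕ) = 1 := by norm_num
          rw [e0, Finset.Ico_self, Finset.empty_union]
          have e1 : n + 1 = (n - ℓ + 1) + ℓ := by omega
          rw [e1]
        · right
          refine ⟨k - 1, by omega, by omega, by omega, ?_⟩
          have e1 : k - 1 + 1 = k := by omega
          have e2 : 2*(k-1)+1 = 2*k-1 := by omega
          have e3 : n - ℓ + (k-1) + 1 = n - ℓ + k := by omega
          rw [e1, e2, e3]
      · rw [if_neg hii, if_neg hii]
        left
        have harg : st i + ℓ - 1 = st i - 1 + ℓ := by have := hstpos i; omega
        rw [hothers i hii, image_pred_Ico _ _ (by have := hstpos i; omega), harg]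
    · intro i j hij
      dsimp only
      have hkey : ∀ a : Fin r, a ≠ i0 →
          Disjoint (Finset.Ico k (2*k-1) ∪ Finset.Ico (n-ℓ+k) (n+1))
            ((A a).image (fun x => x - 1)) := by
        intro a ha
        rw [Finset.disjoint_left]
        intro x hx1 hx2
        obtain ⟨y, hy, rfl⟩ := Finset.mem_image.mp hx2
        have hy2 := hA2 a y hy
        have hyA : y ∈ A i0 := by
          rcases Finset.mem_union.mp hx1 with hx1 | hx1
          · have hxb := Finset.mem_Ico.mp hx1
            rw [hAi0]
            exact Finset.mem_union_left _ (Finset.mem_Ico.mpr ⟨by omega, by omega⟩)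
          · have hxb := Finset.mem_Ico.mp hx1
            rw [hAi0]
            exact Finset.mem_union_right _ (Finset.mem_Ico.mpr ⟨by omega, by omega⟩)
        exact Finset.disjoint_left.mp (hdisj i0 a (fun he => ha he.symm)) hyA hy
      by_cases hi : i = i0
      · subst hi
        rw [if_pos rfl, if_neg (fun he => hij he.symm)]
        exact hkey j (fun he => hij he.symm)
      · by_cases hj : j = i0
        · subst hj
          rw [if_neg hi, if_pos rfl]
          exact (hkey i hi).symm
        · rw [if_neg hi, if_neg hj]
          rw [Finset.disjoint_left]
          intro x hx1 hx2
          obtain ⟨y, hy, hyx⟩ := Finset.mem_image.mp hx1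
          obtain ⟨z, hz, hzx⟩ := Finset.mem_image.mp hx2
          have hy2 := (hA2 i y hy).1
          have hz2 := (hA2 j z hz).1
          have hyz : y = z := by omega
          subst hyz
          exact Finset.disjoint_left.mp (hdisj i j hij) hy hz
    · rw [hSimage]
      ext x
      constructor
      · intro hx
        obtain ⟨i, -, hxi⟩ := Finset.mem_biUnion.mp hx
        simp only [Finset.mem_union, Finset.mem_image, Finset.mem_erase, Finset.mem_singleton]
        by_cases hii : i = i0
        · subst hii
          rw [if_pos rfl] at hxi
          rcases Finset.mem_union.mp hxi with hxi | hxi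
          · have hxb := Finset.mem_Ico.mp hxi
            left
            refine ⟨x + 1, ⟨by omega, ?_⟩, by omega⟩
            apply hAsub i
            rw [hAi0]
            exact Finset.mem_union_left _ (Finset.mem_Ico.mpr ⟨by omega, by omega⟩)
          · have hxb := Finset.mem_Ico.mp hxi
            by_cases hxn : x = n
            · exact Or.inr hxn
            · left
              refine ⟨x + 1, ⟨by omega, ?_⟩, by omega⟩
              apply hAsub i
              rw [hAi0]
              exact Finset.mem_union_right _ (Finset.mem_Ico.mpr ⟨by omega, by omega⟩)
        · rw [if_neg hii] at hxi
          obtain ⟨y, hy, rfl⟩ := Finset.mem_image.mp hxi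
          left
          refine ⟨y, ⟨?_, hAsub i hy⟩, rfl⟩
          intro he
          rw [he] at hy
          exact Finset.disjoint_left.mp (hdisj i0 i (fun h => hii h.symm)) h2kA hy
      · intro hx
        simp only [Finset.mem_union, Finset.mem_image, Finset.mem_erase,
          Finset.mem_singleton] at hx
        rcases hx with ⟨y, ⟨hy2k, hyB⟩, rfl⟩ | rfl
        · have hyB' : y ∈ Finset.univ.biUnion A := by rw [hBA]; exact hyB
          obtain ⟨i, -, hyA⟩ := Finset.mem_biUnion.mp hyB'
          by_cases hii : i = i0
          · subst hii
            rw [hAi0] at hyA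
            apply Finset.mem_biUnion.mpr
            refine ⟨i, Finset.mem_univ _, ?_⟩
            rw [if_pos rfl]
            rcases Finset.mem_union.mp hyA with hyA | hyA
            · have hyb := Finset.mem_Ico.mp hyA
              exact Finset.mem_union_left _ (Finset.mem_Ico.mpr ⟨by omega, by omega⟩)
            · have hyb := Finset.mem_Ico.mp hyA
              exact Finset.mem_union_right _ (Finset.mem_Ico.mpr ⟨by omega, by omega⟩)
          · apply Finset.mem_biUnion.mpr
            refine ⟨i, Finset.mem_univ _, ?_⟩
            rw [if_neg hii]
            exact Finset.mem_image.mpr ⟨y, hyA, rfl⟩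
        · apply Finset.mem_biUnion.mpr
          refine ⟨i0, Finset.mem_univ _, ?_⟩
          rw [if_pos rfl]
          exact Finset.mem_union_right _ (Finset.mem_Ico.mpr ⟨by omega, by omega⟩)
    · intro i j hij
      dsimp only
      have hstc : ∀ i : Fin r, ((if i = i0 then n - ℓ + k else st i - 1 : ℕ) : ZMod (n-ℓ))
          = (st i : ZMod (n-ℓ)) - 1 := by
        intro i
        by_cases hii : i = i0
        · subst hii
          rw [if_pos rfl]
          have e0 : n - ℓ + k = (n - ℓ) + k := by omega
          have e1 : ((n - ℓ + k : ℕ) : ZMod (n-ℓ)) = ((k:ℕ) : ZMod (n-ℓ)) := by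
            rw [e0, Nat.cast_add, ZMod.natCast_self, zero_add]
          rw [e1, hstcast]
          push_cast
          ring
        · rw [if_neg hii, Nat.cast_sub (by have := hstpos i; omega), Nat.cast_one]
      rw [hstc i, hstc j, sub_sub_sub_cancel_right]
      exact hgap i j hij
end

section
/- Let n, ℓ, r, d be positive integers with d | (n−ℓ) and d | r, and let ζ be a primitive d-th root of unity. Then the evaluation of f(q) = ([n−ℓ]_q/[r]_q)·qbinom(n−ℓ−2rℓ+r−1, r−1) at q = ζ equals ((n−ℓ)/r)·C((n−ℓ−2rℓ+r)/d − 1, r/d − 1), provided n−ℓ−2rℓ ≥ 0. -/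
open Polynomial Finset

/-- The `q`-analogue `[m]_q = 1 + q + ... + q^{m-1}` as a complex polynomial. -/
noncomputable def qint (m : ℕ) : Polynomial ℂ := ∑ i ∈ Finset.range m, Polynomial.X ^ i

/-- The Gaussian binomial coefficient, via the `q`-Pascal recurrence. -/
noncomputable def qbinom : ℕ → ℕ → Polynomial ℂ
  | _, 0 => 1
  | 0, _ + 1 => 0
  | n + 1, k + 1 => qbinom n k + Polynomial.X ^ (k + 1) * qbinom n (k + 1)

lemma qb_zero (n : ℕ) : qbinom n 0 = 1 := by cases n <;> rfl

lemma qb_succ (n k : ℕ) :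
    qbinom (n+1) (k+1) = qbinom n k + X ^ (k+1) * qbinom n (k+1) := rfl

lemma qb_eq_zero : ∀ n k : ℕ, n < k → qbinom n k = 0 := by
  intro n
  induction n with
  | zero => intro k hk; match k, hk with | k+1, _ => rfl
  | succ n ih =>
    intro k hk
    match k, hk with
    | k+1, hk =>
      rw [qb_succ, ih k (by omega), ih (k+1) (by omega)]
      ring

lemma qb_self : ∀ n : ℕ, qbinom n n = 1 := by
  intro n
  induction n with
  | zero => rfl
  | succ n ih => rw [qb_succ, ih, qb_eq_zero n (n+1) (by omega)]; ring

lemma qint_add (a b : ℕ) : qint (a + b) = qint a + X ^ a * qint b := by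
  unfold qint
  rw [Finset.sum_range_add, Finset.mul_sum]
  simp [pow_add]

lemma qint_one : qint 1 = 1 := by simp [qint]

lemma qb_one : ∀ n : ℕ, qbinom n 1 = qint n := by
  intro n
  induction n with
  | zero => simp [qint]; rfl
  | succ n ih =>
    show qbinom n 0 + X ^ 1 * qbinom n 1 = _
    rw [qb_zero, ih, show n + 1 = 1 + n by omega, qint_add, qint_one]

lemma P3 : ∀ n k : ℕ, k ≤ n → qbinom (n+1) (k+1) = X ^ (n-k) * qbinom n k + qbinom n (k+1) := by
  intro n
  induction n with
  | zero =>
    intro k hk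
    interval_cases k
    simp [qb_succ, qb_self, qb_eq_zero 0 1 (by omega)]
  | succ n ih =>
    intro k hk
    cases k with
    | zero =>
      have e1 : qint (n+2) = 1 + X * qint (n+1) := by
        rw [show n+2 = 1+(n+1) by omega, qint_add, qint_one, pow_one]
      have e2 : qint (n+2) = qint (n+1) + X^(n+1) * 1 := by
        rw [show n+2 = (n+1)+1 by omega, qint_add, qint_one]
      have d1 : qbinom (n+2) 1 = 1 + X ^ 1 * qbinom (n+1) 1 := by
        rw [qb_succ, qb_zero]
      rw [d1, qb_one, qb_zero, Nat.sub_zero]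
      linear_combination e2 - e1
    | succ k =>
      rcases Nat.lt_or_ge k n with hlt | hge
      · obtain ⟨j, rfl⟩ : ∃ j, n = k + 1 + j := ⟨n-(k+1), by omega⟩
        have d1 : qbinom (k+1+j+2) (k+2) = qbinom (k+1+j+1) (k+1) + X^(k+2) * qbinom (k+1+j+1) (k+2) := by
          rw [show k+1+j+2 = (k+1+j+1)+1 by omega]; exact qb_succ _ _
        have d2 : qbinom (k+1+j+1) (k+1) = qbinom (k+1+j) k + X^(k+1) * qbinom (k+1+j) (k+1) := qb_succ _ _
        have d3 : qbinom (k+1+j+1) (k+2) = X^j * qbinom (k+1+j) (k+1) + qbinom (k+1+j) (k+2) := by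
          have := ih (k+1) (by omega)
          rwa [show k+1+j-(k+1) = j by omega] at this
        have d4 : qbinom (k+1+j+1) (k+1) = X^(j+1) * qbinom (k+1+j) k + qbinom (k+1+j) (k+1) := by
          have := ih k (by omega)
          rwa [show k+1+j-k = j+1 by omega] at this
        rw [show k+1+j+1-(k+1) = j+1 by omega]
        calc qbinom (k+1+j+2) (k+2)
            = (X^(j+1) * qbinom (k+1+j) k + qbinom (k+1+j) (k+1))
              + X^(k+2) * (X^j * qbinom (k+1+j) (k+1) + qbinom (k+1+j) (k+2)) := by
              rw [d1, d4, d3]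
          _ = X^(j+1) * (qbinom (k+1+j) k + X^(k+1) * qbinom (k+1+j) (k+1))
              + (qbinom (k+1+j) (k+1) + X^(k+2) * qbinom (k+1+j) (k+2)) := by ring
          _ = X^(j+1) * qbinom (k+1+j+1) (k+1) + qbinom (k+1+j+1) (k+2) := by
              rw [← d2, ← qb_succ]
      · have hk' : k = n := by omega
        subst hk'
        rw [qb_self, qb_self, qb_eq_zero (k+1) (k+2) (by omega),
          show k + 1 - (k+1) = 0 by omega]
        ring

lemma X_sub_one_ne : (X - 1 : Polynomial ℂ) ≠ 0 := by
  simpa using Polynomial.X_sub_C_ne_zero (1:ℂ)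

lemma hgs (j : ℕ) : (X:Polynomial ℂ)^j - 1 = (X - 1) * qint j := by
  rw [show qint j = ∑ i ∈ Finset.range j, X ^ i from rfl, ← geom_sum_mul]
  ring

lemma L1 (m k : ℕ) (h : k ≤ m) :
    qint (k+1) * qbinom m (k+1) = qint (m-k) * qbinom m k := by
  have h1 := qb_succ m k
  have h2 := P3 m k h
  have h3 : (X - 1) * (qint (k+1) * qbinom m (k+1))
      = (X - 1) * (qint (m-k) * qbinom m k) := by
    rw [← mul_assoc, ← mul_assoc, ← hgs, ← hgs]
    linear_combination h2 - h1
  exact mul_left_cancel₀ X_sub_one_ne h3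

lemma lemI (n k : ℕ) (h : k ≤ n) :
    qint (k+1) * qbinom (n+1) (k+1) = qint (n+1) * qbinom n k := by
  have hq : qint (n+1) = qint (k+1) + X^(k+1) * qint (n-k) := by
    rw [show n+1 = (k+1)+(n-k) by omega]; exact qint_add _ _
  rw [qb_succ, hq]
  linear_combination (X^(k+1) : Polynomial ℂ) * L1 n k h

section eval
variable {ζ : ℂ} {d : ℕ} (hζ : IsPrimitiveRoot ζ d)

lemma eval_qint (j : ℕ) : (qint j).eval ζ = ∑ i ∈ Finset.range j, ζ^i := by
  simp [qint]

lemma eval_qint_mul (j : ℕ) : (qint j).eval ζ * (ζ - 1) = ζ^j - 1 := by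
  rw [eval_qint]; exact geom_sum_mul ζ j

include hζ

lemma eval_qint_zero (j : ℕ) (hdj : d ∣ j) (h2 : 1 < d) : (qint j).eval ζ = 0 := by
  have hne : ζ ≠ 1 := hζ.ne_one h2
  have h1 : ζ ^ j = 1 := by
    obtain ⟨c, rfl⟩ := hdj
    rw [pow_mul, hζ.pow_eq_one, one_pow]
  have := eval_qint_mul (ζ := ζ) j
  rw [h1, sub_self] at this
  rcases mul_eq_zero.mp this with h | h
  · exact h
  · exact absurd (sub_eq_zero.mp h) hne

lemma eval_qint_ne_zero (j : ℕ) (h0 : 0 < j) (hj : j < d) : (qint j).eval ζ ≠ 0 := by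
  intro h
  have := eval_qint_mul (ζ := ζ) j
  rw [h, zero_mul] at this
  have : ζ ^ j = 1 := by
    have h2 : ζ ^ j - 1 = 0 := this.symm
    linear_combination h2
  exact hζ.pow_ne_one_of_pos_of_lt (by omega) hj this

lemma qb_row_d (j : ℕ) (h0 : 0 < j) (hj : j < d) : (qbinom d j).eval ζ = 0 := by
  have hd2 : 1 < d := by omega
  have hI := lemI (d-1) (j-1) (by omega)
  rw [show d-1+1 = d by omega, show j-1+1 = j by omega] at hI
  have := congrArg (Polynomial.eval ζ) hI
  simp only [Polynomial.eval_mul] at this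
  rw [eval_qint_zero hζ d dvd_rfl hd2, zero_mul] at this
  exact (mul_eq_zero.mp this).resolve_left (eval_qint_ne_zero hζ j h0 hj)

lemma zeta_pow_mod (j : ℕ) : ζ ^ j = ζ ^ (j % d) := by
  conv_lhs => rw [← Nat.mod_add_div j d, pow_add, pow_mul, hζ.pow_eq_one, one_pow, mul_one]

end eval

lemma succ_dm_lt (d n : ℕ) (hd : 0 < d) (h : n % d + 1 < d) :
    (n+1) % d = n % d + 1 ∧ (n+1) / d = n / d := by
  have h0 : n = d * (n / d) + n % d := (Nat.div_add_mod n d).symm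
  constructor
  · conv_lhs => rw [show n + 1 = (n % d + 1) + d * (n / d) by omega]
    rw [Nat.add_mul_mod_self_left, Nat.mod_eq_of_lt h]
  · conv_lhs => rw [show n + 1 = (n % d + 1) + d * (n / d) by omega]
    rw [Nat.add_mul_div_left _ _ hd, Nat.div_eq_of_lt h, zero_add]

lemma succ_dm_eq (d n : ℕ) (hd : 0 < d) (h : n % d + 1 = d) :
    (n+1) % d = 0 ∧ (n+1) / d = n / d + 1 := by
  have h0 : n = d * (n / d) + n % d := (Nat.div_add_mod n d).symm
  have hx : d * (n / d + 1) = d * (n / d) + d := by ring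
  have h1 : n + 1 = d * (n / d + 1) := by omega
  constructor
  · rw [h1, Nat.mul_mod_right]
  · rw [h1, Nat.mul_div_cancel_left _ hd]

lemma lucas {ζ : ℂ} {d : ℕ} (hζ : IsPrimitiveRoot ζ d) (hd : 0 < d) :
    ∀ n k : ℕ, (qbinom n k).eval ζ
      = (Nat.choose (n/d) (k/d) : ℂ) * (qbinom (n % d) (k % d)).eval ζ := by
  intro n
  induction n with
  | zero =>
    intro k
    cases k with
    | zero => simp [qb_zero]
    | succ k =>
      rw [show qbinom 0 (k+1) = 0 from rfl]
      rcases Nat.eq_zero_or_pos ((k+1)/d) with h | h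
      · have : (k+1) % d = k+1 := Nat.mod_eq_of_lt (by
          rcases Nat.lt_or_ge (k+1) d with h' | h'
          · exact h'
          · exact absurd (Nat.div_pos h' hd) (by omega))
        rw [this, show qbinom (0 % d) (k+1) = 0 by rw [Nat.zero_mod]; rfl]
        simp
      · rw [Nat.zero_div, Nat.choose_eq_zero_of_lt (by omega)]
        simp
  | succ n ih =>
    intro k
    cases k with
    | zero =>
      simp [qb_zero, Nat.zero_div, Nat.zero_mod]
    | succ k =>
      have hrec : ∀ a b : ℕ, (qbinom (a+1) (b+1)).eval ζ
          = (qbinom a b).eval ζ + ζ^(b+1) * (qbinom a (b+1)).eval ζ := by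
        intro a b; rw [qb_succ]; simp
      have hmn := Nat.mod_lt n (y := d) hd
      have hmk := Nat.mod_lt k (y := d) hd
      rw [hrec n k, ih k, ih (k+1)]
      rcases Nat.lt_or_ge (n % d + 1) d with hA | hA
      · obtain ⟨hn1, hn2⟩ := succ_dm_lt d n hd hA
        rcases Nat.lt_or_ge (k % d + 1) d with hA2 | hA2
        · -- case A1
          obtain ⟨hk1, hk2⟩ := succ_dm_lt d k hd hA2
          rw [hn1, hn2, hk1, hk2]
          have hz : ζ^(k+1) = ζ^(k%d+1) := by
            rw [zeta_pow_mod hζ (k+1), hk1]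
          rw [hz, hrec (n%d) (k%d)]
          ring
        · -- case A2 : k % d + 1 = d
          have hA2' : k % d + 1 = d := by omega
          obtain ⟨hk1, hk2⟩ := succ_dm_eq d k hd hA2'
          rw [hn1, hn2, hk1, hk2]
          have hz : ζ^(k+1) = 1 := by
            rw [zeta_pow_mod hζ (k+1), hk1, pow_zero]
          rw [hz, one_mul]
          have h0 : (qbinom (n % d) (k % d)).eval ζ = 0 := by
            rw [qb_eq_zero (n%d) (k%d) (by omega)]; simp
          rw [h0, mul_zero, zero_add, qb_zero, qb_zero]
      · -- case B : n % d + 1 = d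
        have hA' : n % d + 1 = d := by omega
        obtain ⟨hn1, hn2⟩ := succ_dm_eq d n hd hA'
        rcases Nat.lt_or_ge (k % d + 1) d with hB2 | hB2
        · -- case B1
          obtain ⟨hk1, hk2⟩ := succ_dm_lt d k hd hB2
          rw [hn1, hn2, hk1, hk2]
          have hz : ζ^(k+1) = ζ^(k%d+1) := by rw [zeta_pow_mod hζ (k+1), hk1]
          rw [hz]
          have hrow : (qbinom (n%d+1) (k%d+1)).eval ζ = 0 := by
            rw [show n % d + 1 = d from by omega]
            exact qb_row_d hζ (k%d+1) (by omega) (by omega)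
          rw [hrec (n%d) (k%d)] at hrow
          have hz0 : (qbinom 0 (k%d+1)).eval ζ = 0 := by
            rw [show qbinom 0 (k%d+1) = 0 from rfl]; simp
          rw [hz0, mul_zero]
          linear_combination ((Nat.choose (n/d) (k/d) : ℂ)) * hrow
        · -- case B2
          have hB2' : k % d + 1 = d := by omega
          obtain ⟨hk1, hk2⟩ := succ_dm_eq d k hd hB2'
          rw [hn1, hn2, hk1, hk2]
          have hz : ζ^(k+1) = 1 := by rw [zeta_pow_mod hζ (k+1), hk1, pow_zero]
          rw [hz, one_mul]
          have hnk : n % d = k % d := by omega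
          rw [hnk, qb_self]
          simp only [qb_zero, Polynomial.eval_one, mul_one,
            show qbinom 0 0 = 1 from rfl]
          push_cast [Nat.choose_succ_succ]
          ring

lemma eval_qint_one (j : ℕ) : (qint j).eval 1 = j := by simp [qint]

lemma qint_ne_zero (j : ℕ) (hj : 0 < j) : qint j ≠ 0 := by
  intro h
  have := congrArg (Polynomial.eval 1) h
  rw [eval_qint_one] at this
  simp at this
  omega

lemma deriv_qint_eval {ζ : ℂ} {d : ℕ} (hζ : IsPrimitiveRoot ζ d) (hd : 1 < d)
    (j : ℕ) (hdj : d ∣ j) (hj : 0 < j) :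
    (Polynomial.derivative (qint j)).eval ζ * ((ζ - 1) * ζ) = j := by
  have hid : qint j * (X - 1) = (X:Polynomial ℂ)^j - 1 := by
    rw [hgs j]; ring
  have hder := congrArg Polynomial.derivative hid
  rw [Polynomial.derivative_mul] at hder
  simp only [Polynomial.derivative_sub, Polynomial.derivative_X_pow,
    Polynomial.derivative_X, Polynomial.derivative_one] at hder
  have heval := congrArg (Polynomial.eval ζ) hder
  simp only [Polynomial.eval_add, Polynomial.eval_mul, Polynomial.eval_sub,
    Polynomial.eval_X, Polynomial.eval_one, Polynomial.eval_zero, Polynomial.eval_pow,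
    Polynomial.eval_natCast, Polynomial.eval_C] at heval
  rw [eval_qint_zero hζ j hdj hd] at heval
  have hzj : ζ ^ j = 1 := by
    obtain ⟨c, rfl⟩ := hdj
    rw [pow_mul, hζ.pow_eq_one, one_pow]
  have hzj1 : ζ ^ (j-1) * ζ = 1 := by
    rw [← pow_succ, show j - 1 + 1 = j by omega, hzj]
  linear_combination ζ * heval + (j:ℂ) * hzj1

/-- let `d ∣ n - ℓ`, `d ∣ r`, and let `f` be the polynomial
`([n-ℓ]_q / [r]_q) · qbinom(n-ℓ-2rℓ+r-1, r-1)` (characterized by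
`f · [r]_q = [n-ℓ]_q · qbinom(n-ℓ-2rℓ+r-1, r-1)`).  Then for any primitive `d`-th root of
unity `ζ`, `f(ζ) = ((n-ℓ)/r) · C((n-ℓ-2rℓ+r)/d - 1, r/d - 1)`. -/
theorem stmt_10 (n ℓ r d : ℕ) (hℓ : 0 < ℓ) (hr : 0 < r) (hd : 0 < d)
    (hn : 2 * r * ℓ + ℓ ≤ n) (hd1 : d ∣ (n - ℓ)) (hd2 : d ∣ r)
    (f : Polynomial ℂ)
    (hf : f * qint r = qint (n - ℓ) * qbinom (n - ℓ - 2 * r * ℓ + r - 1) (r - 1))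
    (ζ : ℂ) (hζ : IsPrimitiveRoot ζ d) :
    f.eval ζ = (((n - ℓ : ℕ) : ℂ) / (r : ℂ)) *
      (Nat.choose ((n - ℓ - 2 * r * ℓ + r) / d - 1) (r / d - 1) : ℂ) := by
  have hrl : 2 * r * ℓ = 2 * (r * ℓ) := by ring
  have hrl1 : 1 ≤ r * ℓ := Nat.mul_pos hr hℓ
  set M := n - ℓ - 2 * r * ℓ + r with hMdef
  have hrM : r ≤ M := by omega
  have hM0 : 0 < M := by omega
  have hm0 : 0 < n - ℓ := by omega
  have hdvd2rl : d ∣ 2 * r * ℓ := by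
    obtain ⟨c, hc⟩ := hd2
    exact ⟨2 * c * ℓ, by rw [hc]; ring⟩
  have hdM : d ∣ M := (Nat.dvd_sub hd1 hdvd2rl).add hd2
  have hdr : d ≤ r := Nat.le_of_dvd hr hd2
  -- key polynomial identity
  have hstep : qint r * qbinom M r = qint M * qbinom (M-1) (r-1) := by
    have := lemI (M-1) (r-1) (by omega)
    rwa [show M-1+1 = M by omega, show r-1+1 = r by omega] at this
  have key : f * qint M = qint (n - ℓ) * qbinom M r := by
    apply mul_left_cancel₀ (qint_ne_zero r hr)
    calc qint r * (f * qint M) = (f * qint r) * qint M := by ring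
      _ = (qint (n - ℓ) * qbinom (M-1) (r-1)) * qint M := by rw [hf]
      _ = qint (n - ℓ) * (qint M * qbinom (M-1) (r-1)) := by ring
      _ = qint (n - ℓ) * (qint r * qbinom M r) := by rw [← hstep]
      _ = qint r * (qint (n - ℓ) * qbinom M r) := by ring
  -- q-Lucas value
  have hG : (qbinom M r).eval ζ = (Nat.choose (M/d) (r/d) : ℂ) := by
    have hm1 : M % d = 0 := by obtain ⟨c, hc⟩ := hdM; rw [hc]; exact Nat.mul_mod_right d c
    have hm2 : r % d = 0 := by obtain ⟨c, hc⟩ := hd2; rw [hc]; exact Nat.mul_mod_right d c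
    rw [lucas hζ hd M r, hm1, hm2, show qbinom 0 0 = 1 from rfl]
    simp
  -- unified scalar equation
  have hkey2 : f.eval ζ * (M:ℂ) = ((n - ℓ : ℕ) : ℂ) * (Nat.choose (M/d) (r/d) : ℂ) := by
    rcases eq_or_lt_of_le (show 1 ≤ d from hd) with hd1' | hd2'
    · -- d = 1, ζ = 1
      have hz1 : ζ = 1 := by
        have := hζ.pow_eq_one
        rwa [← hd1', pow_one] at this
      subst hz1
      have := congrArg (Polynomial.eval 1) key
      simp only [Polynomial.eval_mul] at this
      rw [eval_qint_one, eval_qint_one, hG] at this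
      exact this
    · -- d ≥ 2, use derivatives
      have hder := congrArg Polynomial.derivative key
      rw [Polynomial.derivative_mul, Polynomial.derivative_mul] at hder
      have heval := congrArg (Polynomial.eval ζ) hder
      simp only [Polynomial.eval_add, Polynomial.eval_mul] at heval
      rw [eval_qint_zero hζ M hdM hd2', eval_qint_zero hζ (n - ℓ) hd1 hd2'] at heval
      have hDM := deriv_qint_eval hζ hd2' M hdM hM0
      have hDm := deriv_qint_eval hζ hd2' (n - ℓ) hd1 hm0
      calc f.eval ζ * (M:ℂ)
          = f.eval ζ * ((Polynomial.derivative (qint M)).eval ζ * ((ζ-1)*ζ)) := by rw [hDM]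
        _ = ((Polynomial.derivative f).eval ζ * 0 + f.eval ζ * (Polynomial.derivative (qint M)).eval ζ) * ((ζ-1)*ζ) := by ring
        _ = ((Polynomial.derivative (qint (n-ℓ))).eval ζ * (qbinom M r).eval ζ + 0 * (Polynomial.derivative (qbinom M r)).eval ζ) * ((ζ-1)*ζ) := by rw [heval]
        _ = ((Polynomial.derivative (qint (n-ℓ))).eval ζ * ((ζ-1)*ζ)) * (qbinom M r).eval ζ := by ring
        _ = ((n - ℓ : ℕ) : ℂ) * (Nat.choose (M/d) (r/d) : ℂ) := by rw [hDm, hG]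
  -- final arithmetic
  have ha : 1 ≤ M / d := Nat.div_pos (Nat.le_of_dvd hM0 hdM) hd
  have hb : 1 ≤ r / d := Nat.div_pos hdr hd
  have hnat : (M/d) * Nat.choose (M/d - 1) (r/d - 1) = Nat.choose (M/d) (r/d) * (r/d) := by
    have h := Nat.add_one_mul_choose_eq (M/d - 1) (r/d - 1)
    rwa [show M/d - 1 + 1 = M/d by omega, show r/d - 1 + 1 = r/d by omega] at h
  have hcast : Nat.choose (M/d) (r/d) * r = Nat.choose (M/d - 1) (r/d - 1) * M := by
    have h1 : M / d * d = M := Nat.div_mul_cancel hdM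
    have h2 : r / d * d = r := Nat.div_mul_cancel hd2
    calc Nat.choose (M/d) (r/d) * r = Nat.choose (M/d) (r/d) * (r/d * d) := by rw [h2]
      _ = (Nat.choose (M/d) (r/d) * (r/d)) * d := by ring
      _ = ((M/d) * Nat.choose (M/d - 1) (r/d - 1)) * d := by rw [← hnat]
      _ = Nat.choose (M/d - 1) (r/d - 1) * (M/d * d) := by ring
      _ = Nat.choose (M/d - 1) (r/d - 1) * M := by rw [h1]
  have hM0' : ((M:ℕ):ℂ) ≠ 0 := Nat.cast_ne_zero.mpr (by omega)
  have hr0 : ((r:ℕ):ℂ) ≠ 0 := Nat.cast_ne_zero.mpr (by omega)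
  have hc : (Nat.choose (M/d) (r/d) : ℂ) * r = (Nat.choose (M/d - 1) (r/d - 1) : ℂ) * M := by
    exact_mod_cast congrArg (Nat.cast : ℕ → ℂ) hcast
  apply mul_right_cancel₀ (mul_ne_zero hM0' hr0)
  calc f.eval ζ * ((M:ℂ) * r) = (f.eval ζ * M) * r := by ring
    _ = (((n - ℓ : ℕ):ℂ) * (Nat.choose (M/d) (r/d) : ℂ)) * r := by rw [hkey2]
    _ = ((n - ℓ : ℕ):ℂ) * ((Nat.choose (M/d) (r/d) : ℂ) * r) := by ring
    _ = ((n - ℓ : ℕ):ℂ) * ((Nat.choose (M/d - 1) (r/d - 1) : ℂ) * M) := by rw [hc]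
    _ = (((n - ℓ : ℕ):ℂ) / r * (Nat.choose (M/d - 1) (r/d - 1) : ℂ)) * ((M:ℂ) * r) := by
        field_simp
end

section
/- Define polynomials P_d recursively by P₁((n₁),(ℓ₁),(r₁)) = n₁ and P_d(n⃗,ℓ⃗,r⃗) = ∏ᵢ nᵢ − 4·Σ_{1≤i<j≤d} rᵢrⱼℓⱼ²·P_{i−1}(n⃗(i),ℓ⃗(i),r⃗(i))·∏_{i<k<j}(n_k−2r_kℓ_k)·∏_{k>j} n_k, where n⃗(i) = (n₁−2r₁ℓᵢ,...,n_{i−1}−2r_{i−1}ℓᵢ), ℓ⃗(i) = (ℓ₁−ℓᵢ,...,ℓ_{i−1}−ℓᵢ), r⃗(i) = (r₁,...,r_{i−1}). If each nᵢ is the linear polynomial n − ℓᵢ − 2Σ_{j≠i} rⱼ min(ℓᵢ,ℓⱼ) in the variable n, then P_d(n⃗,ℓ⃗,r⃗) is a monic polynomial in n of degree d. -/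
open Polynomial

/-- The recursively defined orbit-length polynomials `P_d(n⃗, ℓ⃗, r⃗)`:
`P₁((n₁),(ℓ₁),(r₁)) = n₁` and
`P_d = ∏ᵢ nᵢ - 4 Σ_{i<j} rᵢrⱼℓⱼ² · P_{i-1}(n⃗(i),ℓ⃗(i),r⃗(i)) · ∏_{i<k<j}(n_k - 2r_kℓ_k) · ∏_{k>j} n_k`,
where `n⃗(i) = (n₁-2r₁ℓᵢ,…,n_{i-1}-2r_{i-1}ℓᵢ)`, `ℓ⃗(i) = (ℓ₁-ℓᵢ,…,ℓ_{i-1}-ℓᵢ)`,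
`r⃗(i) = (r₁,…,r_{i-1})` (indices here are 1-based; the implementation is 0-based). -/
noncomputable def P : (d : ℕ) → (Fin d → Polynomial ℚ) → (Fin d → ℕ) → (Fin d → ℕ) →
    Polynomial ℚ
  | 0, _, _, _ => 1
  | d + 1, nv, lv, rv =>
      (∏ i, nv i) -
        4 * ∑ i : Fin (d + 1), ∑ j : Fin (d + 1),
          if i < j then
            ((rv i : Polynomial ℚ) * (rv j : Polynomial ℚ) * ((lv j : Polynomial ℚ)) ^ 2) *
              P i.val (fun k => nv ⟨k.val, by omega⟩ - 2 * (rv ⟨k.val, by omega⟩ : Polynomial ℚ) * (lv i : Polynomial ℚ))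
                (fun k => lv ⟨k.val, by omega⟩ - lv i)
                (fun k => rv ⟨k.val, by omega⟩) *
              (∏ k : Fin (d + 1), if i < k ∧ k < j then nv k - 2 * (rv k : Polynomial ℚ) * (lv k : Polynomial ℚ) else 1) *
              (∏ k : Fin (d + 1), if j < k then nv k else 1)
          else 0
  termination_by d _ _ _ => d
  decreasing_by omega

lemma const_natDegree (a b : ℕ) : (2 * (a : Polynomial ℚ) * (b : Polynomial ℚ)).natDegree = 0 := by
  have h1 : ((2 : Polynomial ℚ) * (a : Polynomial ℚ) * (b : Polynomial ℚ)).natDegree ≤ 0 := by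
    calc _ ≤ ((2 : Polynomial ℚ) * (a : Polynomial ℚ)).natDegree + ((b:Polynomial ℚ)).natDegree :=
        natDegree_mul_le
      _ ≤ ((2:Polynomial ℚ)).natDegree + ((a:Polynomial ℚ)).natDegree + ((b:Polynomial ℚ)).natDegree := by
        gcongr; exact natDegree_mul_le
      _ = 0 := by simp [natDegree_natCast]
  omega

lemma monic_sub_const {p q : Polynomial ℚ} (hp : p.Monic) (hp1 : p.natDegree = 1)
    (hq : q.natDegree = 0) : (p - q).Monic ∧ (p - q).natDegree = 1 := by
  have hlt : q.natDegree < p.natDegree := by omega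
  have hdlt : q.degree < p.degree := by
    calc q.degree ≤ (q.natDegree : WithBot ℕ) := degree_le_natDegree
      _ < (p.natDegree : WithBot ℕ) := by exact_mod_cast hlt
      _ = p.degree := (degree_eq_natDegree hp.ne_zero).symm
  exact ⟨hp.sub_of_left hdlt, by rw [natDegree_sub_eq_left_of_natDegree_lt hlt, hp1]⟩

lemma sum_ind (n a : ℕ) : (∑ m ∈ Finset.range n, if a < m then 1 else 0) = n - (a + 1) := by
  induction n with
  | zero => simp
  | succ n ih => rw [Finset.sum_range_succ, ih]; split_ifs <;> omega

lemma key : ∀ d (nv : Fin d → Polynomial ℚ) (lv rv : Fin d → ℕ),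
    (∀ i, (nv i).Monic ∧ (nv i).natDegree = 1) →
    (P d nv lv rv).Monic ∧ (P d nv lv rv).natDegree = d := by
  intro d
  induction d using Nat.strong_induction_on with
  | _ d IH =>
  match d with
  | 0 =>
    intro nv lv rv _
    rw [P]
    exact ⟨monic_one, natDegree_one⟩
  | Nat.succ d =>
    intro nv lv rv h
    rw [P]
    set S := ∑ i : Fin (d + 1), ∑ j : Fin (d + 1),
          if i < j then
            ((rv i : Polynomial ℚ) * (rv j : Polynomial ℚ) * ((lv j : Polynomial ℚ)) ^ 2) *
              P i.val (fun k => nv ⟨k.val, by omega⟩ - 2 * (rv ⟨k.val, by omega⟩ : Polynomial ℚ) * (lv i : Polynomial ℚ))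
                (fun k => lv ⟨k.val, by omega⟩ - lv i)
                (fun k => rv ⟨k.val, by omega⟩) *
              (∏ k : Fin (d + 1), if i < k ∧ k < j then nv k - 2 * (rv k : Polynomial ℚ) * (lv k : Polynomial ℚ) else 1) *
              (∏ k : Fin (d + 1), if j < k then nv k else 1)
          else 0 with hSdef
    have hS : S.natDegree ≤ d := by
      apply natDegree_sum_le_of_forall_le
      intro i _
      apply natDegree_sum_le_of_forall_le
      intro j _
      split_ifs with hij
      · set c := ((rv i : Polynomial ℚ) * (rv j : Polynomial ℚ) * ((lv j : Polynomial ℚ)) ^ 2) with hc0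
        set Q := P i.val (fun k => nv ⟨k.val, by omega⟩ - 2 * (rv ⟨k.val, by omega⟩ : Polynomial ℚ) * (lv i : Polynomial ℚ))
                (fun k => lv ⟨k.val, by omega⟩ - lv i)
                (fun k => rv ⟨k.val, by omega⟩) with hQ0
        set p1 := (∏ k : Fin (d + 1), if i < k ∧ k < j then nv k - 2 * (rv k : Polynomial ℚ) * (lv k : Polynomial ℚ) else 1) with hp10
        set p2 := (∏ k : Fin (d + 1), if j < k then nv k else 1) with hp20
        have hQ := IH i.val (by omega)
          (fun k => nv ⟨k.val, by omega⟩ - 2 * (rv ⟨k.val, by omega⟩ : Polynomial ℚ) * (lv i : Polynomial ℚ))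
          (fun k => lv ⟨k.val, by omega⟩ - lv i)
          (fun k => rv ⟨k.val, by omega⟩)
          (fun k => monic_sub_const (h ⟨k.val, by omega⟩).1 (h ⟨k.val, by omega⟩).2
            (const_natDegree _ _))
        have hc : c.natDegree ≤ 0 := by
          rw [hc0]
          calc _ ≤ ((rv i : Polynomial ℚ) * (rv j : Polynomial ℚ)).natDegree
              + (((lv j : Polynomial ℚ)) ^ 2).natDegree := natDegree_mul_le
            _ ≤ (rv i : Polynomial ℚ).natDegree + (rv j : Polynomial ℚ).natDegree
              + 2 * (lv j : Polynomial ℚ).natDegree := by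
                gcongr
                · exact natDegree_mul_le
                · exact natDegree_pow_le
            _ = 0 := by simp [natDegree_natCast]
        have hp1 : p1.natDegree ≤ ∑ k : Fin (d + 1), (if i < k ∧ k < j then 1 else 0) := by
          rw [hp10]
          refine le_trans (natDegree_prod_le _ _) (Finset.sum_le_sum ?_)
          intro k _
          split_ifs with hk
          · exact le_of_eq (monic_sub_const (h k).1 (h k).2 (const_natDegree _ _)).2
          · simp
        have hp2 : p2.natDegree ≤ ∑ k : Fin (d + 1), (if j < k then 1 else 0) := by
          rw [hp20]
          refine le_trans (natDegree_prod_le _ _) (Finset.sum_le_sum ?_)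
          intro k _
          split_ifs with hk
          · exact le_of_eq (h k).2
          · simp
        have hsum : i.val + (∑ k : Fin (d + 1), (if i < k ∧ k < j then 1 else 0))
            + (∑ k : Fin (d + 1), (if j < k then 1 else 0)) ≤ d := by
          have hcomb : (∑ k : Fin (d + 1), (if i < k ∧ k < j then 1 else 0))
              + (∑ k : Fin (d + 1), (if j < k then 1 else 0))
              ≤ ∑ k : Fin (d + 1), (if i < k then 1 else 0) := by
            rw [← Finset.sum_add_distrib]
            apply Finset.sum_le_sum
            intro k _
            have hij' : i.val < j.val := hij
            simp only [Fin.lt_def]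
            split_ifs <;> omega
          have htot : (∑ k : Fin (d + 1), (if i < k then (1:ℕ) else 0)) = d - i.val := by
            have e1 : (∑ k : Fin (d + 1), (if i < k then (1:ℕ) else 0))
                = ∑ m ∈ Finset.range (d + 1), (if i.val < m then 1 else 0) := by
              rw [Finset.sum_range fun m => if i.val < m then (1:ℕ) else 0]
              refine Finset.sum_congr rfl (fun k _ => ?_)
              simp only [Fin.lt_def]
            rw [e1, sum_ind]
            omega
          have hi : i.val ≤ d := by omega
          omega
        calc (c * Q * p1 * p2).natDegree ≤ (c * Q * p1).natDegree + p2.natDegree :=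
            natDegree_mul_le
          _ ≤ ((c * Q).natDegree + p1.natDegree) + p2.natDegree := by
            gcongr; exact natDegree_mul_le
          _ ≤ ((c.natDegree + Q.natDegree) + p1.natDegree) + p2.natDegree := by
            gcongr; exact natDegree_mul_le
          _ ≤ ((0 + i.val) + (∑ k : Fin (d + 1), (if i < k ∧ k < j then 1 else 0)))
              + (∑ k : Fin (d + 1), (if j < k then 1 else 0)) := by
            gcongr <;> first
              | exact hc
              | exact le_of_eq hQ.2
              | exact hp1
              | exact hp2
          _ ≤ d := by omega
      · simp
    have hprodM : (∏ i, nv i).Monic := monic_prod_of_monic _ _ (fun i _ => (h i).1)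
    have hproddeg : (∏ i, nv i).natDegree = d + 1 := by
      rw [natDegree_prod _ _ (fun i _ => (h i).1.ne_zero)]
      simp [(fun i => (h i).2)]
    have h4S : (4 * S).natDegree ≤ d := by
      calc (4 * S).natDegree ≤ (4 : Polynomial ℚ).natDegree + S.natDegree := natDegree_mul_le
        _ ≤ 0 + d := by
          gcongr <;> first | simp | exact hS
        _ = d := by omega
    have hlt : (4 * S).natDegree < (∏ i, nv i).natDegree := by omega
    have hdlt : (4 * S).degree < (∏ i, nv i).degree := by
      calc (4 * S).degree ≤ ((4 * S).natDegree : WithBot ℕ) := degree_le_natDegree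
        _ < ((∏ i, nv i).natDegree : WithBot ℕ) := by exact_mod_cast hlt
        _ = (∏ i, nv i).degree := (degree_eq_natDegree hprodM.ne_zero).symm
    exact ⟨hprodM.sub_of_left hdlt,
      by rw [natDegree_sub_eq_left_of_natDegree_lt hlt, hproddeg]⟩

/-- if `ℓ₁ > ... > ℓ_d ≥ 1`, `rᵢ ≥ 1`, and each `nᵢ` is the linear polynomial
`n - ℓᵢ - 2 Σ_{j≠i} rⱼ min(ℓᵢ,ℓⱼ)` in the variable `n`, then `P_d(n⃗,ℓ⃗,r⃗)` is a monic
polynomial in `n` of degree `d`. -/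
theorem stmt_16 (d : ℕ) (hd : 1 ≤ d) (nv : Fin d → Polynomial ℚ) (lv rv : Fin d → ℕ)
    (hldec : ∀ i j : Fin d, i < j → lv j < lv i) (hlpos : ∀ i, 1 ≤ lv i)
    (hrpos : ∀ i, 1 ≤ rv i)
    (hnv : ∀ i, nv i =
      X - C ((lv i : ℚ) + 2 * ∑ j ∈ Finset.univ.erase i, (rv j : ℚ) * min (lv i) (lv j))) :
    (P d nv lv rv).Monic ∧ (P d nv lv rv).natDegree = d := by
  apply key
  intro i
  rw [hnv i]
  exact ⟨monic_X_sub_C _, natDegree_X_sub_C _⟩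
end
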